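/- arXiv:2603.15875 — 4 statements merged into one kernel-verified Lean document; each statement's English description precedes it below -/
import Mathlib

section
/- Let f ∈ ℤ[x] be a b-reciprocal polynomial of degree 2n with associated polynomial g of degree n, and let √b ∈ ℂ denote a fixed square root of b. Then disc(f) = b^{n(n−1)} · g(2√b) · g(−2√b) · (disc g)². Equivalently, writing g = Σ_{i=0}^n c_i u^i, X = Σ_{0≤2i≤n} c_{2i}(4b)^i and Y = Σ_{0≤2i+1≤n} c_{2i+1}(4b)^i, one has disc(f) = b^{n(n−1)} · (X² − 4bY²) · (disc g)². -/
open Polynomial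

/-- The discriminant of a complex polynomial `p` of degree `d` with leading coefficient `a`
and roots `r₁, …, r_d` (with multiplicity):
`disc p = (-1)^(d(d-1)/2) · a^(2d-2) · ∏_{i ≠ j} (rᵢ - rⱼ) = a^(2d-2) · ∏_{i < j} (rᵢ - rⱼ)²`. -/
noncomputable def discC (p : Polynomial ℂ) : ℂ :=
  (-1 : ℂ) ^ (p.natDegree * (p.natDegree - 1) / 2) *
    p.leadingCoeff ^ (2 * p.natDegree - 2) *
    ∏ ij ∈ Finset.univ.filter
        (fun ij : Fin p.roots.toList.length × Fin p.roots.toList.length => ij.1 ≠ ij.2),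
      (p.roots.toList.get ij.1 - p.roots.toList.get ij.2)

/-- The `b`-reciprocal polynomial `f(x) = xⁿ·g(x + b/x) = Σ cᵢ x^(n-i) (x² + b)^i` associated
to `g(u) = Σ cᵢ uⁱ`. -/
noncomputable def expandPoly (n : ℕ) (b : ℤ) (g : Polynomial ℤ) : Polynomial ℤ :=
  ∑ i ∈ Finset.range (n + 1), C (g.coeff i) * X ^ (n - i) * (X ^ 2 + C b) ^ i


/-
Over `ℂ` write `g = c ∏ᵢ (u - βᵢ)` and split `x² - βᵢ x + b = (x - αᵢ)(x - αᵢ')`, so that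
`αᵢ + αᵢ' = βᵢ` and `αᵢ αᵢ' = b`. Then `f(x) = xⁿ g(x + b/x) = c ∏ᵢ (x - αᵢ)(x - αᵢ')`.
Writing the discriminant as `c^(2d-2) ∏_{r < r'} (r - r')²`, each pair contributes
`(αᵢ - αᵢ')² = βᵢ² - 4b`, and these multiply to `g(2√b) g(-2√b) / c²`; two pairs `i ≠ j`
contribute `(b (βᵢ - βⱼ)²)²`, because `(αᵢ - αⱼ)(αᵢ - αⱼ') = αᵢ (βᵢ - βⱼ)`.
The second formula is `g(y) g(-y) = E(y²)² - y² O(y²)` for the even and odd parts `E`, `O` of `g`.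
-/

section SqDiffProd

variable {R : Type*} [CommRing R]

def sqDiffProd : List R → R
  | [] => 1
  | x :: t => (t.map fun y => (x - y) ^ 2).prod * sqDiffProd t

def offDiagSubProd (L : List R) : R :=
  ∏ ij ∈ Finset.univ.filter (fun ij : Fin L.length × Fin L.length => ij.1 ≠ ij.2),
    (L.get ij.1 - L.get ij.2)

theorem sqDiffProd_perm {l l' : List R} (h : l.Perm l') : sqDiffProd l = sqDiffProd l' := by
  induction h with
  | nil => rfl
  | cons x h ih => rw [sqDiffProd, sqDiffProd, ih, (h.map _).prod_eq]
  | swap x y l => simp only [sqDiffProd, List.map_cons, List.prod_cons]; ring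
  | trans _ _ ih₁ ih₂ => rw [ih₁, ih₂]

theorem offDiagSubProd_cons (x : R) (t : List R) :
    offDiagSubProd (x :: t) = (t.map fun y => (x - y) * (y - x)).prod * offDiagSubProd t := by
  rw [offDiagSubProd, offDiagSubProd, Finset.prod_filter, Finset.prod_filter,
    Fintype.prod_prod_type, Fintype.prod_prod_type]
  simp only [List.length_cons]
  rw [Fin.prod_univ_succ]
  simp only [Fin.prod_univ_succ, ne_eq, Fin.succ_ne_zero, (Fin.succ_ne_zero _).symm, Fin.succ_inj,
    not_true, not_false_iff, if_true, if_false, List.get_cons_zero, List.get_cons_succ', one_mul]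
  rw [Finset.prod_mul_distrib, ← mul_assoc, ← Finset.prod_mul_distrib]
  simp only [List.get_eq_getElem]
  rw [Fin.prod_univ_fun_getElem t fun y => (x - y) * (y - x)]

theorem offDiagSubProd_eq (L : List R) :
    offDiagSubProd L = (-1) ^ (L.length * (L.length - 1) / 2) * sqDiffProd L := by
  induction L with
  | nil => simp [offDiagSubProd, sqDiffProd]
  | cons x t ih =>
    have hsign : (t.length + 1) * t.length / 2 = t.length * (t.length - 1) / 2 + t.length := by
      rcases t.length with _ | m
      · rfl
      · rw [Nat.add_sub_cancel, ← Nat.add_mul_div_left _ _ two_pos]; ring_nf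
    have hneg : (t.map fun y => (x - y) * (y - x)).prod
        = (-1) ^ t.length * (t.map fun y => (x - y) ^ 2).prod := by
      rw [← List.length_map (f := fun y => (x - y) ^ 2), ← List.prod_map_neg, List.map_map]
      congr 1
      exact List.map_congr_left fun y _ => by simp only [Function.comp_apply]; ring
    rw [offDiagSubProd_cons, ih, hneg, List.length_cons, Nat.add_sub_cancel, hsign, pow_add,
      sqDiffProd]
    ring

theorem prod_map_flatMap_pair (A B h : R → R) (l : List R) :
    ((l.flatMap fun β => [A β, B β]).map h).prod = (l.map fun β => h (A β) * h (B β)).prod := by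
  induction l with
  | nil => rfl
  | cons β t ih => simp [List.flatMap_cons, ih, mul_assoc]

theorem prod_cross_sub_sq_eq_of_vieta {u u' v v' β γ b : R}
    (hu : u + u' = β) (huu : u * u' = b) (hv : v + v' = γ) (hvv : v * v' = b) :
    (u - v) ^ 2 * (u - v') ^ 2 * ((u' - v) ^ 2 * (u' - v') ^ 2) = b ^ 2 * ((β - γ) ^ 2) ^ 2 := by
  have h₁ : (u - v) * (u - v') = u * (β - γ) := by
    linear_combination hvv - huu - u * hv + u * hu
  have h₂ : (u' - v) * (u' - v') = u' * (β - γ) := by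
    linear_combination hvv - huu - u' * hv + u' * hu
  calc (u - v) ^ 2 * (u - v') ^ 2 * ((u' - v) ^ 2 * (u' - v') ^ 2)
      = ((u - v) * (u - v')) ^ 2 * ((u' - v) * (u' - v')) ^ 2 := by ring
    _ = (u * u') ^ 2 * ((β - γ) ^ 2) ^ 2 := by rw [h₁, h₂]; ring
    _ = b ^ 2 * ((β - γ) ^ 2) ^ 2 := by rw [huu]

theorem sqDiffProd_flatMap_pair {b : R} {A B : R → R} (hsum : ∀ β, A β + B β = β)
    (hprod : ∀ β, A β * B β = b) (l : List R) :
    sqDiffProd (l.flatMap fun β => [A β, B β])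
      = (l.map fun β => β ^ 2 - 4 * b).prod * b ^ (l.length * (l.length - 1))
        * sqDiffProd l ^ 2 := by
  induction l with
  | nil => simp [sqDiffProd]
  | cons β t ih =>
    have hpair : (A β - B β) ^ 2 = β ^ 2 - 4 * b := by
      linear_combination (A β + B β + β) * hsum β - 4 * hprod β
    have hcross : (t.map fun γ => (A β - A γ) ^ 2 * (A β - B γ) ^ 2).prod
          * (t.map fun γ => (B β - A γ) ^ 2 * (B β - B γ) ^ 2).prod
        = b ^ (2 * t.length) * (t.map fun γ => (β - γ) ^ 2).prod ^ 2 := by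
      rw [← List.prod_map_mul, List.map_congr_left fun γ _ =>
        prod_cross_sub_sq_eq_of_vieta (hsum β) (hprod β) (hsum γ) (hprod γ)]
      rw [List.prod_map_mul, List.map_const', List.prod_replicate, pow_mul]
      exact congrArg _ (List.prod_map_hom t _ (powMonoidHom 2))
    have hlen : (t.length + 1) * t.length = t.length * (t.length - 1) + 2 * t.length := by
      rcases t.length with _ | m
      · rfl
      · rw [Nat.add_sub_cancel]; ring
    simp only [List.flatMap_cons, List.cons_append, List.nil_append, sqDiffProd, List.map_cons,
      List.prod_cons, prod_map_flatMap_pair, ih, List.length_cons, Nat.add_sub_cancel]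
    rw [hlen, pow_add, hpair]
    linear_combination (β ^ 2 - 4 * b) * (t.map fun β => β ^ 2 - 4 * b).prod
      * b ^ (t.length * (t.length - 1)) * sqDiffProd t ^ 2 * hcross

end SqDiffProd

theorem eval_C_mul_prod_X_sub_C {R : Type*} [CommRing R] (c x : R) (L : List R) :
    eval x (C c * ((L : Multiset R).map fun r => X - C r).prod)
      = c * (L.map fun r => x - r).prod := by
  simp [eval_list_prod, Function.comp_def]

theorem discC_C_mul_prod_X_sub_C {c : ℂ} (hc : c ≠ 0) (L : List ℂ) :
    discC (C c * ((L : Multiset ℂ).map fun r => X - C r).prod)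
      = c ^ (2 * L.length - 2) * sqDiffProd L := by
  set P := C c * ((L : Multiset ℂ).map fun r => X - C r).prod
  have hroots : P.roots = L := by rw [roots_C_mul _ hc, roots_multiset_prod_X_sub_C]
  have hdeg : P.natDegree = L.length := by
    rw [natDegree_C_mul hc, natDegree_multiset_prod_X_sub_C_eq_card, Multiset.coe_card]
  have hlc : P.leadingCoeff = c := by
    rw [leadingCoeff_mul, leadingCoeff_C,
      (monic_multiset_prod_of_monic _ _ fun r _ => monic_X_sub_C r).leadingCoeff, mul_one]
  have hperm : P.roots.toList.Perm L := Multiset.coe_eq_coe.mp (by rw [Multiset.coe_toList, hroots])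
  change _ * _ * offDiagSubProd _ = _
  rw [offDiagSubProd_eq, sqDiffProd_perm hperm, hperm.length_eq, hdeg, hlc]
  have hsign (k : ℕ) : (-1 : ℂ) ^ k * (-1) ^ k = 1 := by rw [← pow_add, ← two_mul, pow_mul]; simp
  linear_combination (c ^ (2 * L.length - 2) * sqDiffProd L) * hsign (L.length * (L.length - 1) / 2)

theorem exists_add_eq_and_mul_eq {K : Type*} [Field K] [IsAlgClosed K] (β b : K) :
    ∃ u v : K, u + v = β ∧ u * v = b := by
  obtain ⟨u, hu⟩ := IsAlgClosed.exists_root (X ^ 2 - C β * X + C b) (by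
    rw [show (X ^ 2 - C β * X + C b : K[X]).degree = 2 by compute_degree!]; decide)
  refine ⟨u, β - u, by ring, ?_⟩
  simp only [IsRoot, eval_add, eval_sub, eval_pow, eval_mul, eval_C, eval_X] at hu
  linear_combination -hu

section ExpandPoly

variable {K : Type*} [Field K] {n : ℕ} {b : ℤ} {g : ℤ[X]}

theorem eval_map_expandPoly (hg : (g.map (Int.castRingHom K)).natDegree ≤ n) {x : K} (hx : x ≠ 0) :
    ((expandPoly n b g).map (Int.castRingHom K)).eval x
      = x ^ n * (g.map (Int.castRingHom K)).eval (x + b / x) := by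
  have hxu : x ^ 2 + b = x * (x + b / x) := by field_simp
  rw [eval_eq_sum_range' (Nat.lt_succ_of_le hg), Finset.mul_sum, expandPoly, Polynomial.map_sum,
    eval_finsetSum]
  refine Finset.sum_congr rfl fun i hi => ?_
  have hin : i ≤ n := Nat.lt_succ_iff.mp (Finset.mem_range.mp hi)
  simp only [Polynomial.map_mul, Polynomial.map_pow, Polynomial.map_add, Polynomial.map_C,
    Polynomial.map_X, eval_mul, eval_pow, eval_add, eval_C, eval_X, coeff_map, Int.coe_castRingHom]
  rw [hxu, mul_pow, ← Nat.sub_add_cancel hin, pow_add, Nat.add_sub_cancel]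
  ring

theorem map_expandPoly_eq_C_mul_prod [Infinite K] {c : K} {L : List K}
    (hG : g.map (Int.castRingHom K) = C c * ((L : Multiset K).map fun r => X - C r).prod)
    (hL : L.length = n) {A B : K → K} (hsum : ∀ β, A β + B β = β) (hprod : ∀ β, A β * B β = b) :
    (expandPoly n b g).map (Int.castRingHom K)
      = C c * (((L.flatMap fun β => [A β, B β] : List K) : Multiset K).map
          fun r => X - C r).prod := by
  have hdeg : (g.map (Int.castRingHom K)).natDegree ≤ n := by
    rw [hG, ← hL, ← Multiset.coe_card, ← natDegree_multiset_prod_X_sub_C_eq_card]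
    exact natDegree_C_mul_le _ _
  refine eq_of_infinite_eval_eq _ _ ((Set.finite_singleton 0).infinite_compl.mono fun x hx => ?_)
  have hx : x ≠ 0 := hx
  rw [Set.mem_ofPred_eq, eval_map_expandPoly hdeg hx, hG, eval_C_mul_prod_X_sub_C,
    eval_C_mul_prod_X_sub_C, prod_map_flatMap_pair]
  calc x ^ n * (c * (L.map fun β => x + b / x - β).prod)
      = c * (L.map fun β => x * (x + b / x - β)).prod := by
        rw [List.prod_map_mul, List.map_const', List.prod_replicate, hL]; ring
    _ = c * (L.map fun β => (x - A β) * (x - B β)).prod := by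
        congr 2
        refine List.map_congr_left fun β _ => ?_
        field_simp
        linear_combination x * hsum β - hprod β

end ExpandPoly

theorem eval_mul_eval_neg_of_eq_C_mul_prod {R : Type*} [CommRing R] {G : R[X]} {c : R}
    {L : List R} (hG : G = C c * ((L : Multiset R).map fun r => X - C r).prod) (y : R) :
    G.eval y * G.eval (-y) = c ^ 2 * (L.map fun β => β ^ 2 - y ^ 2).prod := by
  rw [hG, eval_C_mul_prod_X_sub_C, eval_C_mul_prod_X_sub_C, mul_mul_mul_comm, ← sq,
    ← List.prod_map_mul]
  congr 2
  exact List.map_congr_left fun β _ => by ring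

theorem discC_map_expandPoly {n : ℕ} (hn : 1 ≤ n) (b : ℤ) {g : ℤ[X]} (hg : g.degree = n) {s : ℂ}
    (hs : s ^ 2 = (b : ℂ)) :
    discC ((expandPoly n b g).map (Int.castRingHom ℂ))
      = (b : ℂ) ^ (n * (n - 1))
        * ((g.map (Int.castRingHom ℂ)).eval (2 * s) * (g.map (Int.castRingHom ℂ)).eval (-2 * s))
        * discC (g.map (Int.castRingHom ℂ)) ^ 2 := by
  set G := g.map (Int.castRingHom ℂ)
  set c := G.leadingCoeff
  set L := G.roots.toList
  have hGdeg : G.natDegree = n := (natDegree_map_eq_of_injective (RingHom.injective_int _) g).trans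
    (natDegree_eq_of_degree_eq_some hg)
  have hc : c ≠ 0 := leadingCoeff_ne_zero.mpr (ne_zero_of_natDegree_gt (hGdeg ▸ hn))
  have hroots : G.roots.card = G.natDegree := splits_iff_card_roots.mp (IsAlgClosed.splits G)
  have hL : L.length = n := by rw [Multiset.length_toList, hroots, hGdeg]
  have hG : G = C c * ((L : Multiset ℂ).map fun r => X - C r).prod := by
    rw [Multiset.coe_toList, C_leadingCoeff_mul_prod_multiset_X_sub_C hroots]
  choose A B hsum hprod using fun β => exists_add_eq_and_mul_eq β (b : ℂ)
  have hlenF : (L.flatMap fun β => [A β, B β]).length = 2 * n := by simp [hL, mul_comm]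
  have h4b : (2 * s) ^ 2 = 4 * b := by linear_combination 4 * hs
  rw [map_expandPoly_eq_C_mul_prod hG hL hsum hprod, discC_C_mul_prod_X_sub_C hc,
    sqDiffProd_flatMap_pair hsum hprod, neg_mul, eval_mul_eval_neg_of_eq_C_mul_prod hG, h4b, hG,
    discC_C_mul_prod_X_sub_C hc, hL, hlenF, show 2 * (2 * n) - 2 = 2 + 2 * (2 * n - 2) by omega,
    pow_add, pow_mul]
  ring

theorem Finset.sum_range_two_mul {M : Type*} [AddCommMonoid M] (f : ℕ → M) (k : ℕ) :
    ∑ j ∈ Finset.range (2 * k), f j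
      = ∑ i ∈ Finset.range k, f (2 * i) + ∑ i ∈ Finset.range k, f (2 * i + 1) := by
  induction k with
  | zero => simp
  | succ k ih =>
    rw [Nat.mul_succ, Finset.sum_range_succ, Finset.sum_range_succ, ih, Finset.sum_range_succ,
      Finset.sum_range_succ]
    abel

theorem Finset.sum_range_eq_sum_even_add_sum_odd {M : Type*} [AddCommMonoid M] (f : ℕ → M)
    (m : ℕ) :
    ∑ j ∈ Finset.range m, f j
      = ∑ i ∈ Finset.range ((m + 1) / 2), f (2 * i)
        + ∑ i ∈ Finset.range (m / 2), f (2 * i + 1) := by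
  obtain ⟨k, rfl | rfl⟩ := Nat.even_or_odd' m
  · rw [sum_range_two_mul, show (2 * k + 1) / 2 = k by omega, show 2 * k / 2 = k by omega]
  · rw [Finset.sum_range_succ, sum_range_two_mul, show (2 * k + 1 + 1) / 2 = k + 1 by omega,
      show (2 * k + 1) / 2 = k by omega, Finset.sum_range_succ]
    abel

theorem eval_eq_sum_even_add_mul_sum_odd {R : Type*} [CommRing R] {p : R[X]} {n : ℕ}
    (hn : 1 ≤ n) (hp : p.natDegree ≤ n) (y : R) :
    p.eval y = ∑ i ∈ Finset.range (n / 2 + 1), p.coeff (2 * i) * (y ^ 2) ^ i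
      + y * ∑ i ∈ Finset.range ((n - 1) / 2 + 1), p.coeff (2 * i + 1) * (y ^ 2) ^ i := by
  rw [eval_eq_sum_range' (Nat.lt_succ_of_le hp), Finset.sum_range_eq_sum_even_add_sum_odd,
    show (n + 1 + 1) / 2 = n / 2 + 1 by omega, show (n + 1) / 2 = (n - 1) / 2 + 1 by omega,
    Finset.mul_sum]
  congr 1 <;> refine Finset.sum_congr rfl fun i _ => by ring

theorem eval_mul_eval_neg {R : Type*} [CommRing R] {p : R[X]} {n : ℕ} (hn : 1 ≤ n)
    (hp : p.natDegree ≤ n) (y : R) :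
    p.eval y * p.eval (-y)
      = (∑ i ∈ Finset.range (n / 2 + 1), p.coeff (2 * i) * (y ^ 2) ^ i) ^ 2
        - y ^ 2
          * (∑ i ∈ Finset.range ((n - 1) / 2 + 1), p.coeff (2 * i + 1) * (y ^ 2) ^ i) ^ 2 := by
  rw [eval_eq_sum_even_add_mul_sum_odd hn hp, eval_eq_sum_even_add_mul_sum_odd hn hp, neg_sq]
  ring

theorem disc_bReciprocal_general (n : ℕ) (hn : 1 ≤ n) (b : ℤ)
    (g f : Polynomial ℤ) (hg : g.degree = (n : ℕ)) (hf : f = expandPoly n b g)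
    (s : ℂ) (hs : s ^ 2 = (b : ℂ)) :
    discC (f.map (Int.castRingHom ℂ)) =
      (b : ℂ) ^ (n * (n - 1)) *
        ((g.map (Int.castRingHom ℂ)).eval (2 * s) * (g.map (Int.castRingHom ℂ)).eval (-2 * s)) *
        discC (g.map (Int.castRingHom ℂ)) ^ 2 ∧
    discC (f.map (Int.castRingHom ℂ)) =
      (b : ℂ) ^ (n * (n - 1)) *
        (((∑ i ∈ Finset.range (n / 2 + 1), g.coeff (2 * i) * (4 * b) ^ i : ℤ) : ℂ) ^ 2
          - 4 * (b : ℂ) *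
            ((∑ i ∈ Finset.range ((n - 1) / 2 + 1), g.coeff (2 * i + 1) * (4 * b) ^ i : ℤ) : ℂ) ^ 2) *
        discC (g.map (Int.castRingHom ℂ)) ^ 2 := by
  subst hf
  have hdisc := discC_map_expandPoly hn b hg hs
  refine ⟨hdisc, hdisc.trans ?_⟩
  have hdeg : (g.map (Int.castRingHom ℂ)).natDegree ≤ n :=
    natDegree_map_le.trans (natDegree_eq_of_degree_eq_some hg).le
  have h4b : (2 * s) ^ 2 = 4 * b := by linear_combination 4 * hs
  rw [neg_mul, eval_mul_eval_neg hn hdeg, h4b]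
  simp only [coeff_map, eq_intCast]
  push_cast
  ring

theorem disc_bReciprocal (n : ℕ) (hn : 1 ≤ n) (b : ℤ) (hb : b ≠ 0)
    (g f : Polynomial ℤ) (hg : g.degree = (n : ℕ)) (hf : f = expandPoly n b g)
    (s : ℂ) (hs : s ^ 2 = (b : ℂ)) :
    discC (f.map (Int.castRingHom ℂ)) =
      (b : ℂ) ^ (n * (n - 1)) *
        ((g.map (Int.castRingHom ℂ)).eval (2 * s) * (g.map (Int.castRingHom ℂ)).eval (-2 * s)) *
        discC (g.map (Int.castRingHom ℂ)) ^ 2 ∧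
    discC (f.map (Int.castRingHom ℂ)) =
      (b : ℂ) ^ (n * (n - 1)) *
        (((∑ i ∈ Finset.range (n / 2 + 1), g.coeff (2 * i) * (4 * b) ^ i : ℤ) : ℂ) ^ 2
          - 4 * (b : ℂ) *
            ((∑ i ∈ Finset.range ((n - 1) / 2 + 1), g.coeff (2 * i + 1) * (4 * b) ^ i : ℤ) : ℂ) ^ 2) *
        discC (g.map (Int.castRingHom ℂ)) ^ 2 :=
  disc_bReciprocal_general n hn b g f hg hf s hs
end

section
/- Let n ≥ 1 and let G_0 = 𝔽_2^n ⋊ S_n be the hyperoctahedral group, with S_n acting by permuting coordinates, and let π : G_0 → S_n be the natural projection. Up to conjugacy in G_0, the subgroups of G_0 that are maximal among proper subgroups of G_0 and satisfy π(H) = S_n are precisely: G_1 = {(v,σ) : v_1 + … + v_n = 0} (for every n ≥ 1), G_2 = {(v,σ) : v_1 + … + v_n = sgn(σ)} (for n ≥ 2), and G_3 = ⟨1⟩ × S_n = {(v,σ) : v = (0,…,0) or v = (1,…,1)} (for n ≥ 3 odd). Consequently, every proper subgroup of G_0 whose projection onto S_n is all of S_n is contained in a conjugate of G_1, G_2, or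 (for n ≥ 3 odd) G_3. -/
/-- The group `𝔽₂ⁿ` written multiplicatively. -/
abbrev Vn (n : ℕ) := Multiplicative (Fin n → ZMod 2)

/-- The action of `Sₙ` on `𝔽₂ⁿ` by permuting coordinates, as a homomorphism to `MulAut`. -/
def permAction (n : ℕ) : Equiv.Perm (Fin n) →* MulAut (Vn n) where
  toFun σ :=
    { toFun := fun v => Multiplicative.ofAdd fun i => Multiplicative.toAdd v (σ.symm i)
      invFun := fun v => Multiplicative.ofAdd fun i => Multiplicative.toAdd v (σ i)
      left_inv := fun v => by
        show Multiplicative.ofAdd (fun i => Multiplicative.toAdd v (σ.symm (σ i))) = v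
        simp
      right_inv := fun v => by
        show Multiplicative.ofAdd (fun i => Multiplicative.toAdd v (σ (σ.symm i))) = v
        simp
      map_mul' := fun v w => rfl }
  map_one' := rfl
  map_mul' := fun σ τ => rfl

/-- The hyperoctahedral group `G₀ = 𝔽₂ⁿ ⋊ Sₙ = S₂ ≀ Sₙ`. -/
abbrev G0 (n : ℕ) := SemidirectProduct (Vn n) (Equiv.Perm (Fin n)) (permAction n)

/-- The coordinate-sum character `(v, σ) ↦ v₁ + ⋯ + vₙ` of `G₀`. -/
def sumHom (n : ℕ) : G0 n →* Multiplicative (ZMod 2) where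
  toFun g := Multiplicative.ofAdd (∑ i, Multiplicative.toAdd g.left i)
  map_one' := by
    show Multiplicative.ofAdd (∑ i : Fin n, (0 : ZMod 2)) = 1
    simp
  map_mul' := fun a b => by
    show Multiplicative.ofAdd
        (∑ i, (Multiplicative.toAdd a.left i + Multiplicative.toAdd b.left (a.right.symm i)))
      = _
    rw [Finset.sum_add_distrib, Equiv.sum_comp a.right.symm fun i => Multiplicative.toAdd b.left i]
    exact ofAdd_add _ _

/-- The sign of a permutation as an element of `ZMod 2`: `0` for even, `1` for odd. -/
def sgn2 {n : ℕ} (σ : Equiv.Perm (Fin n)) : ZMod 2 :=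
  if Equiv.Perm.sign σ = 1 then 0 else 1

set_option linter.unnecessarySeqFocus false in
/-- The character `(v, σ) ↦ v₁ + ⋯ + vₙ + sgn σ` of `G₀`. -/
def sumSgnHom (n : ℕ) : G0 n →* Multiplicative (ZMod 2) where
  toFun g := Multiplicative.ofAdd ((∑ i, Multiplicative.toAdd g.left i) + sgn2 g.right)
  map_one' := by
    show Multiplicative.ofAdd ((∑ i : Fin n, (0:ZMod 2)) + sgn2 1) = 1
    simp [sgn2]
  map_mul' := fun a b => by
    have hsgn : sgn2 (a.right * b.right) = sgn2 a.right + sgn2 b.right := by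
      unfold sgn2
      rcases Int.units_eq_one_or (Equiv.Perm.sign a.right) with h1 | h1 <;>
        rcases Int.units_eq_one_or (Equiv.Perm.sign b.right) with h2 | h2 <;>
          simp [Equiv.Perm.sign_mul, h1, h2] <;> decide
    show Multiplicative.ofAdd
        ((∑ i, (Multiplicative.toAdd a.left i + Multiplicative.toAdd b.left (a.right.symm i)))
          + sgn2 (a * b).right) = _
    have hr : (a * b).right = a.right * b.right := rfl
    rw [hr, hsgn, Finset.sum_add_distrib,
      Equiv.sum_comp a.right.symm fun i => Multiplicative.toAdd b.left i]
    rw [show ∀ x y z w : ZMod 2, x + y + (z + w) = (x + z) + (y + w) by intros; ring]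
    exact ofAdd_add _ _

/-- `G₁ = {(v,σ) : v₁ + ⋯ + vₙ = 0}`. -/
def G1 (n : ℕ) : Subgroup (G0 n) := MonoidHom.ker (sumHom n)

/-- `G₂ = {(v,σ) : v₁ + ⋯ + vₙ = sgn σ}`. -/
def G2 (n : ℕ) : Subgroup (G0 n) := MonoidHom.ker (sumSgnHom n)

/-- `G₃ = ⟨𝟙⟩ × Sₙ = {(v,σ) : v = (0,…,0) or v = (1,…,1)}`. -/
def G3 (n : ℕ) : Subgroup (G0 n) where
  carrier := {g | Multiplicative.toAdd g.left = 0 ∨ Multiplicative.toAdd g.left = fun _ => 1}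
  one_mem' := Or.inl rfl
  mul_mem' := by
    rintro a b (ha | ha) (hb | hb)
    · left
      funext i
      show Multiplicative.toAdd a.left i + Multiplicative.toAdd b.left (a.right.symm i) = 0
      rw [congrFun ha, congrFun hb]; rfl
    · right
      funext i
      show Multiplicative.toAdd a.left i + Multiplicative.toAdd b.left (a.right.symm i) = 1
      rw [congrFun ha, congrFun hb]; rfl
    · right
      funext i
      show Multiplicative.toAdd a.left i + Multiplicative.toAdd b.left (a.right.symm i) = 1
      rw [congrFun ha, congrFun hb]; rfl
    · left
      funext i
      show Multiplicative.toAdd a.left i + Multiplicative.toAdd b.left (a.right.symm i) = 0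
      rw [congrFun ha, congrFun hb]; decide
  inv_mem' := by
    rintro a (ha | ha)
    · left
      funext i
      show -Multiplicative.toAdd a.left (a.right⁻¹.symm i) = 0
      rw [congrFun ha]; simp
    · right
      funext i
      show -Multiplicative.toAdd a.left (a.right⁻¹.symm i) = 1
      rw [congrFun ha]; decide


/-!
Let `U = {v | (v, 1) ∈ K}`. Since `K` projects onto `Sₙ`, `U` is an `Sₙ`-invariant subgroup of
`𝔽₂ⁿ`, and an invariant subgroup containing a non-constant vector contains every even-weight
vector, since it contains `eᵢ + eⱼ` for all `i, j`.

If every vector of `U` has even weight, the coordinate sum factors through `K → Sₙ` and gives a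
character of `Sₙ`, so it is trivial or the sign. This gives `K ≤ G₁` or `K ≤ G₂`.
Otherwise `U` has an odd vector, so `U = {0, 𝟙}` (else `U = 𝔽₂ⁿ` and `K = G₀`) and `n` is odd.
Then `K ⊓ G₁` is a complement of `𝔽₂ⁿ`, and its vector part `c` is a cocycle `Sₙ → 𝔽₂ⁿ` of
even weight. On the stabiliser of a point `a`, `τ ↦ c τ a` is a character, so it is trivial or
the sign. Summing the coordinates of `c σ` over an odd `σ` rules out the sign because `n` is odd.
When it is trivial, Shapiro's argument writes `c` as a coboundary, which conjugates `K` into `G₃`.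

Conversely, `G₁` and `G₂` are kernels of characters of order two. A subgroup strictly above
`G₃ ∋ 𝟙` contains a non-constant vector, hence all of `𝔽₂ⁿ` since `𝟙` has odd weight.
-/

open Equiv Multiplicative SemidirectProduct

lemma zmodTwo_add_eq_one_of_ne {a b : ZMod 2} (h : a ≠ b) : a + b = 1 := by
  revert a b; decide

lemma exists_ne_of_ne_zero_of_ne_one {α : Type*} {v : α → ZMod 2} (h0 : v ≠ 0) (h1 : v ≠ 1) :
    ∃ i j, v i ≠ v j := by
  obtain ⟨i, hi⟩ := Function.ne_iff.1 h0
  obtain ⟨j, hj⟩ := Function.ne_iff.1 h1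
  simp only [Pi.zero_apply, Pi.one_apply] at hi hj
  refine ⟨i, j, ?_⟩
  revert hi hj
  generalize v i = a
  generalize v j = b
  revert a b; decide

section InvariantSubgroup

variable {α : Type*} [DecidableEq α] {U : AddSubgroup (α → ZMod 2)}

lemma single_add_single_mem (hU : ∀ σ : Perm α, ∀ v ∈ U, v ∘ σ ∈ U) {w : α → ZMod 2}
    (hwU : w ∈ U) {i j : α} (hw : w i ≠ w j) (k : α) :
    Pi.single i 1 + Pi.single k 1 ∈ U := by
  have hij : i ≠ j := fun h => hw (h ▸ rfl)
  have hpair : Pi.single i 1 + Pi.single j 1 ∈ U := by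
    convert U.add_mem hwU (hU (swap i j) w hwU) using 1
    funext x
    simp only [Pi.add_apply, Pi.single_apply, Function.comp_apply, swap_apply_def]
    split_ifs <;> subst_vars <;>
      simp_all [CharTwo.add_self_eq_zero, zmodTwo_add_eq_one_of_ne,
        zmodTwo_add_eq_one_of_ne hw.symm]
  rcases eq_or_ne k i with rfl | hki
  · convert U.zero_mem
    funext x
    simp [CharTwo.add_self_eq_zero]
  convert hU (swap j k) _ hpair using 1
  funext x
  simp only [Pi.add_apply, Pi.single_apply, Function.comp_apply, swap_apply_def]
  split_ifs <;> subst_vars <;> simp_all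

variable [Fintype α]

lemma mem_of_sum_eq_zero (hU : ∀ σ : Perm α, ∀ v ∈ U, v ∘ σ ∈ U) {w : α → ZMod 2}
    (hwU : w ∈ U) {i j : α} (hw : w i ≠ w j) {v : α → ZMod 2} (hv : ∑ k, v k = 0) : v ∈ U := by
  have hdecomp : v = ∑ k, v k • (Pi.single i 1 + Pi.single k 1) := by
    simp only [smul_add, Finset.sum_add_distrib, ← Finset.sum_smul, hv, zero_smul, zero_add]
    exact pi_eq_sum_univ' v
  rw [hdecomp, ← AddSubgroup.mem_toZModSubmodule 2]
  exact Submodule.sum_mem _ fun k _ => Submodule.smul_mem _ _ <|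
    (AddSubgroup.mem_toZModSubmodule 2).2 (single_add_single_mem hU hwU hw k)

lemma eq_top_of_sum_eq_one_mem (hU : ∀ σ : Perm α, ∀ v ∈ U, v ∘ σ ∈ U) {w : α → ZMod 2}
    (hwU : w ∈ U) {i j : α} (hw : w i ≠ w j) {u : α → ZMod 2} (huU : u ∈ U)
    (hu : ∑ k, u k = 1) : U = ⊤ := by
  refine eq_top_iff.2 fun v _ => ?_
  rcases (by decide : ∀ x : ZMod 2, x = 0 ∨ x = 1) (∑ k, v k) with hv | hv
  · exact mem_of_sum_eq_zero hU hwU hw hv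
  · have hvu : ∑ k, (v - u) k = 0 := by simp [Finset.sum_sub_distrib, hv, hu]
    simpa using U.add_mem (mem_of_sum_eq_zero hU hwU hw hvu) huU

end InvariantSubgroup

lemma Equiv.Perm.eq_one_or_ker_eq_alternatingGroup {α : Type*} [Fintype α] [DecidableEq α]
    (φ : Perm α →* Multiplicative (ZMod 2)) : φ = 1 ∨ φ.ker = alternatingGroup α := by
  refine or_iff_not_imp_left.2 fun hφ => Perm.eq_alternatingGroup_of_index_eq_two ?_
  obtain ⟨σ, hσ⟩ : ∃ σ, φ σ ≠ 1 := by
    by_contra! h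
    exact hφ (MonoidHom.ext h)
  have hrange : φ.range = ⊤ := by
    refine eq_top_iff.2 fun y _ => ?_
    rcases (by decide : ∀ z : Multiplicative (ZMod 2), z = 1 ∨ ∀ x, x ≠ 1 → x = z) y with h | h
    · exact h ▸ φ.range.one_mem
    · exact h _ hσ ▸ MonoidHom.mem_range.2 ⟨σ, rfl⟩
  rw [Subgroup.index_ker, hrange, Subgroup.card_top, Nat.card_eq_fintype_card]
  rfl

lemma MonoidHom.isCoatom_ker_of_ne_one {G : Type*} [Group G] (f : G →* Multiplicative (ZMod 2))
    {x : G} (hx : f x ≠ 1) : IsCoatom f.ker := by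
  refine ⟨fun h => hx <| f.mem_ker.1 <| h ▸ Subgroup.mem_top x, fun H hH => ?_⟩
  refine eq_top_iff.2 fun g _ => ?_
  obtain ⟨y, hyH, hy⟩ := SetLike.exists_of_lt hH
  by_cases hg : g ∈ f.ker
  · exact hH.le hg
  have hgy : g * y⁻¹ ∈ f.ker := by
    rw [MonoidHom.mem_ker] at hg hy ⊢
    rw [map_mul, map_inv]
    generalize f g = a at hg
    generalize f y = b at hy
    revert a b; decide
  simpa using H.mul_mem (hH.le hgy) hyH

section Cocycle

variable {n : ℕ}

lemma sgn2_eq_of_eq_zero_iff {σ : Perm (Fin n)} {x : ZMod 2} (h : x = 0 ↔ Perm.sign σ = 1) :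
    x = sgn2 σ := by
  unfold sgn2
  split_ifs with hσ
  · exact h.2 hσ
  · exact (by decide : ∀ y : ZMod 2, y ≠ 0 → y = 1) x (mt h.1 hσ)

lemma sgn2_mul (σ τ : Perm (Fin n)) : sgn2 (σ * τ) = sgn2 σ + sgn2 τ := by
  simp only [sgn2, Perm.sign_mul]
  generalize Perm.sign σ = a
  generalize Perm.sign τ = b
  revert a b
  decide

/-- The vector part of a complement of `𝔽₂ⁿ` in `G₀`: a crossed homomorphism `Sₙ → 𝔽₂ⁿ`. -/
def IsCocycle (c : Perm (Fin n) → Fin n → ZMod 2) : Prop :=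
  ∀ σ τ i, c (σ * τ) i = c σ i + c τ (σ⁻¹ i)

variable {c : Perm (Fin n) → Fin n → ZMod 2}

lemma IsCocycle.apply_eq_zero_or_sgn2 (hc : IsCocycle c) (a : Fin n) :
    (∀ τ : Perm (Fin n), τ a = a → c τ a = 0) ∨
      ∀ τ : Perm (Fin n), τ a = a → c τ a = sgn2 τ := by
  let ψ : Perm {x // x ≠ a} →* Multiplicative (ZMod 2) :=
    MonoidHom.mk' (fun ρ => ofAdd (c (Perm.ofSubtype ρ) a)) fun ρ ρ' => by
      rw [map_mul, hc, Perm.inv_eq_iff_eq.2 (Perm.ofSubtype_apply_of_not_mem ρ (by simp)).symm]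
      rfl
  have hψ : ∀ τ : Perm (Fin n), τ a = a →
      ∃ ρ, ψ ρ = ofAdd (c τ a) ∧ Perm.sign ρ = Perm.sign τ := fun τ hτ => by
    have hpres : ∀ x, τ x ≠ a ↔ x ≠ a := fun x => τ.injective.ne_iff' hτ
    have hsupp : ∀ x, τ x ≠ x → x ≠ a := fun x hx hxa => hx (hxa ▸ hτ)
    refine ⟨τ.subtypePerm hpres, ?_, Perm.sign_subtypePerm τ hpres hsupp⟩
    show ofAdd (c (Perm.ofSubtype _) a) = _
    rw [Perm.ofSubtype_subtypePerm hpres hsupp]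
  rcases Perm.eq_one_or_ker_eq_alternatingGroup ψ with h | h
  · refine Or.inl fun τ hτ => ?_
    obtain ⟨ρ, hρ, -⟩ := hψ τ hτ
    rw [h, MonoidHom.one_apply, eq_comm, ofAdd_eq_one] at hρ
    exact hρ
  · refine Or.inr fun τ hτ => sgn2_eq_of_eq_zero_iff ?_
    obtain ⟨ρ, hρ, hsign⟩ := hψ τ hτ
    rw [← ofAdd_eq_one, ← hρ, ← MonoidHom.mem_ker, h, Perm.mem_alternatingGroup, hsign]

/-- Shapiro's lemma in coordinates: `c` is determined by its values on the transpositions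
`swap a i` and by its restriction to the stabiliser of `a`. -/
lemma IsCocycle.apply_eq (hc : IsCocycle c) (a : Fin n) (σ : Perm (Fin n)) (i : Fin n) :
    c σ i = c (swap a i) i + c (swap a (σ⁻¹ i)) (σ⁻¹ i) +
      c (swap a i * σ * swap a (σ⁻¹ i)) a := by
  set j := σ⁻¹ i
  have h₁ := hc (swap a i) (swap a i * σ * swap a j) i
  have h₂ := hc σ (swap a j) i
  rw [← mul_assoc, ← mul_assoc, swap_mul_self, one_mul, h₂, swap_inv, swap_apply_right] at h₁
  grind

lemma IsCocycle.exists_eq_add_apply_inv (hc : IsCocycle c) (hodd : Odd n)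
    (hsum : ∀ σ, ∑ i, c σ i = 0) : ∃ w : Fin n → ZMod 2, ∀ σ i, c σ i = w i + w (σ⁻¹ i) := by
  set a : Fin n := ⟨0, hodd.pos⟩
  have hfix : ∀ σ i, (swap a i * σ * swap a (σ⁻¹ i)) a = a := fun σ i => by simp
  have hstab : ∀ τ : Perm (Fin n), τ a = a → c τ a = 0 := by
    refine (hc.apply_eq_zero_or_sgn2 a).elim id fun hsgn => ?_
    suffices h : ∀ σ : Perm (Fin n), sgn2 σ = 0 from fun τ hτ => (hsgn τ hτ).trans (h τ)
    intro σ
    set f : Fin n → ZMod 2 := fun i => c (swap a i) i + sgn2 (swap a i)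
    have hterm : ∀ i, c σ i = f i + f (σ⁻¹ i) + sgn2 σ := fun i => by
      rw [hc.apply_eq a, hsgn _ (hfix σ i), sgn2_mul, sgn2_mul]
      ring
    have := hsum σ
    simp only [hterm, Finset.sum_add_distrib, Equiv.sum_comp σ⁻¹ f, CharTwo.add_self_eq_zero,
      zero_add, Finset.sum_const, Finset.card_univ, Fintype.card_fin, nsmul_eq_mul,
      (ZMod.natCast_eq_one_iff_odd).2 hodd, one_mul] at this
    exact this
  exact ⟨fun i => c (swap a i) i, fun σ i => by rw [hc.apply_eq a, hstab _ (hfix σ i), add_zero]⟩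

end Cocycle

section HyperoctahedralGroup

variable {n : ℕ} {K H : Subgroup (G0 n)}

lemma G0.ext {g h : G0 n} (hl : ∀ i, toAdd g.left i = toAdd h.left i)
    (hr : g.right = h.right) : g = h :=
  SemidirectProduct.ext (funext hl) hr

@[simp] lemma toAdd_left_mul_apply (a b : G0 n) (i : Fin n) :
    toAdd (a * b).left i = toAdd a.left i + toAdd b.left (a.right⁻¹ i) := rfl

@[simp] lemma toAdd_permAction_apply (σ : Perm (Fin n)) (v : Vn n) (i : Fin n) :
    toAdd (permAction n σ v) i = toAdd v (σ⁻¹ i) := rfl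

lemma mul_inv_eq_inl {g h : G0 n} (hgh : g.right = h.right) :
    g * h⁻¹ = inl (ofAdd (toAdd g.left - toAdd h.left)) :=
  G0.ext (fun i => by simp [hgh, sub_eq_add_neg])
    (by simp only [mul_right, inv_right, hgh, mul_inv_cancel, right_inl])

lemma mul_inl_mul_inv (g : G0 n) (v : Fin n → ZMod 2) :
    g * inl (ofAdd v) * g⁻¹ = inl (ofAdd fun i => v (g.right⁻¹ i)) :=
  G0.ext (fun i => by simp) (by simp)

lemma map_rightHom_eq_top_iff : H.map rightHom = ⊤ ↔ ∀ σ, ∃ g ∈ H, g.right = σ := by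
  simp [eq_top_iff, SetLike.le_def]

lemma sumHom_apply (g : G0 n) : sumHom n g = ofAdd (∑ i, toAdd g.left i) := rfl

lemma sumSgnHom_apply (g : G0 n) :
    sumSgnHom n g = ofAdd (∑ i, toAdd g.left i + sgn2 g.right) := rfl

lemma mem_G1 {g : G0 n} : g ∈ G1 n ↔ ∑ i, toAdd g.left i = 0 := by
  rw [G1, MonoidHom.mem_ker, sumHom_apply, ofAdd_eq_one]

lemma mem_G2 {g : G0 n} : g ∈ G2 n ↔ ∑ i, toAdd g.left i + sgn2 g.right = 0 := by
  rw [G2, MonoidHom.mem_ker, sumSgnHom_apply, ofAdd_eq_one]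

lemma mem_G3 {g : G0 n} : g ∈ G3 n ↔ toAdd g.left = 0 ∨ toAdd g.left = 1 := Iff.rfl

lemma sum_one_of_odd (hodd : Odd n) : ∑ _i : Fin n, (1 : ZMod 2) = 1 := by
  simpa using (ZMod.natCast_eq_one_iff_odd).2 hodd

lemma inl_one_mul_mem_G1_iff (hodd : Odd n) {g : G0 n} :
    inl (ofAdd 1) * g ∈ G1 n ↔ g ∉ G1 n := by
  rw [mem_G1, mem_G1]
  simp only [toAdd_left_mul_apply, left_inl, right_inl, inv_one, Perm.one_apply, toAdd_ofAdd,
    Pi.one_apply, Finset.sum_add_distrib, sum_one_of_odd hodd]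
  generalize ∑ i, toAdd g.left i = s
  revert s; decide

def baseVectors (K : Subgroup (G0 n)) : AddSubgroup (Fin n → ZMod 2) :=
  (K.comap inl).toAddSubgroup'

lemma mem_baseVectors {v : Fin n → ZMod 2} : v ∈ baseVectors K ↔ inl (ofAdd v) ∈ K := Iff.rfl

lemma sub_mem_baseVectors {g h : G0 n} (hg : g ∈ K) (hh : h ∈ K) (hgh : g.right = h.right) :
    toAdd g.left - toAdd h.left ∈ baseVectors K :=
  mem_baseVectors.2 (mul_inv_eq_inl hgh ▸ K.mul_mem hg (K.inv_mem hh))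

lemma comp_mem_baseVectors (hK : K.map rightHom = ⊤) (σ : Perm (Fin n))
    {v : Fin n → ZMod 2} (hv : v ∈ baseVectors K) : v ∘ σ ∈ baseVectors K := by
  obtain ⟨g, hg, hgσ⟩ := map_rightHom_eq_top_iff.1 hK σ⁻¹
  have := mul_inl_mul_inv g v ▸ K.mul_mem (K.mul_mem hg (mem_baseVectors.1 hv)) (K.inv_mem hg)
  simp only [hgσ, inv_inv] at this
  exact mem_baseVectors.2 this

lemma eq_top_of_baseVectors_eq_top (hK : K.map rightHom = ⊤) (h : baseVectors K = ⊤) :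
    K = ⊤ := by
  refine eq_top_iff.2 fun g _ => ?_
  obtain ⟨k, hk, hkg⟩ := map_rightHom_eq_top_iff.1 hK g.right
  have hgk : g * k⁻¹ ∈ K := by
    rw [mul_inv_eq_inl hkg.symm, ← mem_baseVectors, h]
    trivial
  simpa using K.mul_mem hgk hk

end HyperoctahedralGroup

section SubgroupsProjectingOnto

variable {n : ℕ} {K H : Subgroup (G0 n)}

lemma le_G1_or_le_G2 (hK : K.map rightHom = ⊤) (heven : ∀ v ∈ baseVectors K, ∑ i, v i = 0) :
    K ≤ G1 n ∨ K ≤ G2 n := by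
  set π := (rightHom : G0 n →* Perm (Fin n)).comp K.subtype
  have hπ : Function.Surjective π := fun σ => by
    obtain ⟨g, hg, hgσ⟩ := map_rightHom_eq_top_iff.1 hK σ
    exact ⟨⟨g, hg⟩, hgσ⟩
  have hker : π.ker ≤ ((sumHom n).comp K.subtype).ker := fun g hg =>
    mem_G1.2 (by simpa using heven _ (sub_mem_baseVectors g.2 K.one_mem hg))
  set φ := π.liftOfSurjective hπ ⟨_, hker⟩
  have hφ : ∀ g ∈ K, φ g.right = sumHom n g := fun g hg =>
    π.liftOfRightInverse_comp_apply _ _ ⟨_, hker⟩ ⟨g, hg⟩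
  rcases Perm.eq_one_or_ker_eq_alternatingGroup φ with h | h
  · refine Or.inl fun g hg => MonoidHom.mem_ker.2 ?_
    rw [← hφ g hg, h, MonoidHom.one_apply]
  · refine Or.inr fun g hg => mem_G2.2 ?_
    have hsum : ∑ i, toAdd g.left i = sgn2 g.right := by
      refine sgn2_eq_of_eq_zero_iff ?_
      rw [← Perm.mem_alternatingGroup, ← h, MonoidHom.mem_ker, hφ g hg, sumHom_apply,
        ofAdd_eq_one]
    rw [hsum, CharTwo.add_self_eq_zero]

lemma exists_mem_inf_G1 (hodd : Odd n) (hone : (1 : Fin n → ZMod 2) ∈ baseVectors K)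
    {g : G0 n} (hg : g ∈ K) :
    ∃ k ∈ K ⊓ G1 n, k.right = g.right ∧ (k = g ∨ k = inl (ofAdd 1) * g) := by
  by_cases hg1 : g ∈ G1 n
  · exact ⟨g, ⟨hg, hg1⟩, rfl, Or.inl rfl⟩
  · exact ⟨_, ⟨K.mul_mem hone hg, (inl_one_mul_mem_G1_iff hodd).2 hg1⟩, by simp, Or.inr rfl⟩

lemma eq_of_mem_inf_G1 (hodd : Odd n) (hconst : ∀ v ∈ baseVectors K, v = 0 ∨ v = 1)
    {g h : G0 n} (hg : g ∈ K ⊓ G1 n) (hh : h ∈ K ⊓ G1 n) (hgh : g.right = h.right) : g = h := by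
  rcases hconst _ (sub_mem_baseVectors hg.1 hh.1 hgh) with h0 | h1
  · exact G0.ext (fun i => sub_eq_zero.1 (congrFun h0 i)) hgh
  · have hsum := congr_arg (fun v : Fin n → ZMod 2 => ∑ i, v i) h1
    simp [Finset.sum_sub_distrib, mem_G1.1 hg.2, mem_G1.1 hh.2, sum_one_of_odd hodd] at hsum

lemma exists_le_map_conj_G3 (hK : K.map rightHom = ⊤) (hodd : Odd n)
    (hone : (1 : Fin n → ZMod 2) ∈ baseVectors K) (hconst : ∀ v ∈ baseVectors K, v = 0 ∨ v = 1) :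
    ∃ w : Fin n → ZMod 2, K ≤ (G3 n).map (MulAut.conj (inl (ofAdd w))).toMonoidHom := by
  have hlift : ∀ σ, ∃ k ∈ K ⊓ G1 n, k.right = σ := fun σ => by
    obtain ⟨g, hg, rfl⟩ := map_rightHom_eq_top_iff.1 hK σ
    obtain ⟨k, hk, hkr, -⟩ := exists_mem_inf_G1 hodd hone hg
    exact ⟨k, hk, hkr⟩
  choose L hL hLr using hlift
  have hc : IsCocycle fun σ => toAdd (L σ).left := fun σ τ i => by
    have hmul : L (σ * τ) = L σ * L τ :=
      eq_of_mem_inf_G1 hodd hconst (hL _) (mul_mem (hL σ) (hL τ)) (by simp [hLr])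
    simp [hmul, hLr]
  obtain ⟨w, hw⟩ := hc.exists_eq_add_apply_inv hodd fun σ => mem_G1.1 (hL σ).2
  refine ⟨w, fun g hg => ?_⟩
  obtain ⟨k, hk, hkr, hkg⟩ := exists_mem_inf_G1 hodd hone hg
  have hkw : ∀ i, toAdd k.left i = w i + w (g.right.symm i) := by
    rw [eq_of_mem_inf_G1 hodd hconst hk (hL _) (by rw [hkr, hLr])]
    exact hw _
  rw [Subgroup.mem_map_equiv, MulAut.conj_symm_apply, mem_G3]
  rcases hkg with rfl | rfl
  · refine Or.inl (funext fun i => ?_)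
    simp
    grind
  · refine Or.inr (funext fun i => ?_)
    simp at hkw ⊢
    grind

lemma exists_le_map_conj_G3_of_sum_eq_one (hK : K.map rightHom = ⊤) (hKtop : K ≠ ⊤)
    {u : Fin n → ZMod 2} (huK : u ∈ baseVectors K) (hu : ∑ i, u i = 1) :
    3 ≤ n ∧ Odd n ∧
      ∃ w : Fin n → ZMod 2, K ≤ (G3 n).map (MulAut.conj (inl (ofAdd w))).toMonoidHom := by
  have hconst : ∀ v ∈ baseVectors K, v = 0 ∨ v = 1 := fun v hv => by
    by_contra! h
    obtain ⟨i, j, hij⟩ := exists_ne_of_ne_zero_of_ne_one h.1 h.2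
    exact hKtop <| eq_top_of_baseVectors_eq_top hK <| eq_top_of_sum_eq_one_mem
      (fun σ _ hv => comp_mem_baseVectors hK σ hv) hv hij huK hu
  have hu1 : u = 1 := (hconst u huK).resolve_left fun h => by simp [h] at hu
  have hodd : Odd n := (ZMod.natCast_eq_one_iff_odd).1 (by simpa [hu1] using hu)
  have hn : n ≠ 1 := by
    rintro rfl
    refine hKtop (eq_top_of_baseVectors_eq_top hK (eq_top_iff.2 fun v _ => ?_))
    rcases (by decide : ∀ v : Fin 1 → ZMod 2, v = 0 ∨ v = 1) v with rfl | rfl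
    exacts [(baseVectors K).zero_mem, hu1 ▸ huK]
  refine ⟨?_, hodd, exists_le_map_conj_G3 hK hodd (hu1 ▸ huK) hconst⟩
  obtain ⟨m, rfl⟩ := hodd
  omega

end SubgroupsProjectingOnto

section StandardMaximal

variable {n : ℕ} {K H : Subgroup (G0 n)}

lemma map_rightHom_map_conj (u : G0 n) (hH : H.map rightHom = ⊤) :
    (H.map (MulAut.conj u).toMonoidHom).map rightHom = ⊤ := by
  refine map_rightHom_eq_top_iff.2 fun σ => ?_
  obtain ⟨g, hg, hgσ⟩ := map_rightHom_eq_top_iff.1 hH (u.right⁻¹ * σ * u.right)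
  exact ⟨_, Subgroup.mem_map_of_mem _ hg, by simp [hgσ, mul_assoc]⟩

lemma isCoatom_map_conj_iff (u : G0 n) :
    IsCoatom (H.map (MulAut.conj u).toMonoidHom) ↔ IsCoatom H :=
  (MulEquiv.mapSubgroup (MulAut.conj u)).isCoatom_iff H

lemma map_conj_one (H : Subgroup (G0 n)) : H.map (MulAut.conj (1 : G0 n)).toMonoidHom = H := by
  ext; simp

lemma map_rightHom_G1 : (G1 n).map rightHom = ⊤ :=
  map_rightHom_eq_top_iff.2 fun σ => ⟨inr σ, mem_G1.2 (by simp), rfl⟩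

lemma map_rightHom_G2 (a : Fin n) : (G2 n).map rightHom = ⊤ :=
  map_rightHom_eq_top_iff.2 fun σ => ⟨inl (ofAdd (Pi.single a (sgn2 σ))) * inr σ,
    mem_G2.2 (by simp [CharTwo.add_self_eq_zero]), by simp⟩

lemma map_rightHom_G3 : (G3 n).map rightHom = ⊤ :=
  map_rightHom_eq_top_iff.2 fun σ => ⟨inr σ, mem_G3.2 (Or.inl rfl), rfl⟩

lemma isCoatom_G1 (a : Fin n) : IsCoatom (G1 n) :=
  MonoidHom.isCoatom_ker_of_ne_one (x := inl (ofAdd (Pi.single a 1))) _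
    (by rw [sumHom_apply]; simp)

lemma isCoatom_G2 (a : Fin n) : IsCoatom (G2 n) :=
  MonoidHom.isCoatom_ker_of_ne_one (x := inl (ofAdd (Pi.single a 1))) _
    (by rw [sumSgnHom_apply]; simp [sgn2])

lemma isCoatom_G3 (hn : 2 ≤ n) (hodd : Odd n) : IsCoatom (G3 n) := by
  refine ⟨fun h => ?_, fun H hH => ?_⟩
  · have hmem := h ▸ Subgroup.mem_top (inl (ofAdd (Pi.single (⟨0, by omega⟩ : Fin n) 1)))
    rcases mem_G3.1 hmem with h0 | h1
    · simpa using congrFun h0 ⟨0, by omega⟩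
    · simpa [Pi.single_apply, Fin.ext_iff] using congrFun h1 ⟨1, by omega⟩
  obtain ⟨g, hgH, hg⟩ := SetLike.exists_of_lt hH
  rw [mem_G3, not_or] at hg
  have hHr : H.map rightHom = ⊤ := top_le_iff.1 (map_rightHom_G3 ▸ Subgroup.map_mono hH.le)
  have hvec : toAdd g.left ∈ baseVectors H := by
    simpa using sub_mem_baseVectors hgH (hH.le (mem_G3.2 (Or.inl rfl) : inr g.right ∈ G3 n)) rfl
  have hone : (1 : Fin n → ZMod 2) ∈ baseVectors H := hH.le (mem_G3.2 (Or.inr rfl))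
  obtain ⟨i, j, hij⟩ := exists_ne_of_ne_zero_of_ne_one hg.1 hg.2
  exact eq_top_of_baseVectors_eq_top hHr <| eq_top_of_sum_eq_one_mem
    (fun σ _ hv => comp_mem_baseVectors hHr σ hv) hvec hij hone (sum_one_of_odd hodd)

lemma G2_eq_G1 (hn : n ≤ 1) : G2 n = G1 n := by
  have : Subsingleton (Fin n) := Fin.subsingleton_iff_le_one.2 hn
  ext g
  rw [mem_G1, mem_G2, Subsingleton.elim g.right 1]
  simp [sgn2]

def IsStandardMaximal (n : ℕ) (H : Subgroup (G0 n)) : Prop :=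
  H = G1 n ∨ (2 ≤ n ∧ H = G2 n) ∨ (3 ≤ n ∧ Odd n ∧ H = G3 n)

lemma IsStandardMaximal.isCoatom_map_conj (hn : 1 ≤ n) (hH : IsStandardMaximal n H)
    (u : G0 n) : IsCoatom (H.map (MulAut.conj u).toMonoidHom) ∧
      (H.map (MulAut.conj u).toMonoidHom).map rightHom = ⊤ := by
  rw [isCoatom_map_conj_iff]
  refine ⟨?_, map_rightHom_map_conj u ?_⟩ <;> rcases hH with rfl | ⟨-, rfl⟩ | ⟨hn3, hodd, rfl⟩
  exacts [isCoatom_G1 ⟨0, hn⟩, isCoatom_G2 ⟨0, hn⟩, isCoatom_G3 (by omega) hodd,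
    map_rightHom_G1, map_rightHom_G2 ⟨0, hn⟩, map_rightHom_G3]

lemma exists_isStandardMaximal_le_map_conj (hK : K.map rightHom = ⊤) (hKtop : K ≠ ⊤) :
    ∃ H, IsStandardMaximal n H ∧ ∃ u : G0 n, K ≤ H.map (MulAut.conj u).toMonoidHom := by
  by_cases heven : ∀ v ∈ baseVectors K, ∑ i, v i = 0
  · rcases le_G1_or_le_G2 hK heven with h | h
    · exact ⟨G1 n, Or.inl rfl, 1, (map_conj_one _).symm ▸ h⟩
    by_cases hn : 2 ≤ n
    · exact ⟨G2 n, Or.inr (Or.inl ⟨hn, rfl⟩), 1, (map_conj_one _).symm ▸ h⟩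
    · exact ⟨G1 n, Or.inl rfl, 1, (map_conj_one _).symm ▸ G2_eq_G1 (n := n) (by omega) ▸ h⟩
  push Not at heven
  obtain ⟨u, huK, hu⟩ := heven
  replace hu : ∑ i, u i = 1 := by
    revert hu; generalize ∑ i, u i = s; revert s; decide
  obtain ⟨hn3, hodd, w, hw⟩ := exists_le_map_conj_G3_of_sum_eq_one hK hKtop huK hu
  exact ⟨G3 n, Or.inr (Or.inr ⟨hn3, hodd, rfl⟩), _, hw⟩

end StandardMaximal

theorem maximal_subgroups_hyperoctahedral (n : ℕ) (hn : 1 ≤ n) :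
    (∀ K : Subgroup (G0 n),
        (IsCoatom K ∧ K.map SemidirectProduct.rightHom = ⊤) ↔
          ∃ u : G0 n,
            K = (G1 n).map (MulAut.conj u).toMonoidHom ∨
            (2 ≤ n ∧ K = (G2 n).map (MulAut.conj u).toMonoidHom) ∨
            (3 ≤ n ∧ Odd n ∧ K = (G3 n).map (MulAut.conj u).toMonoidHom)) ∧
    (∀ K : Subgroup (G0 n), K ≠ ⊤ → K.map SemidirectProduct.rightHom = ⊤ →
        ∃ u : G0 n,
          K ≤ (G1 n).map (MulAut.conj u).toMonoidHom ∨
          K ≤ (G2 n).map (MulAut.conj u).toMonoidHom ∨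
          (3 ≤ n ∧ Odd n ∧ K ≤ (G3 n).map (MulAut.conj u).toMonoidHom)) := by
  refine ⟨fun K => ⟨fun ⟨hco, hK⟩ => ?_, ?_⟩, fun K hKtop hK => ?_⟩
  · obtain ⟨H, hH, u, hle⟩ := exists_isStandardMaximal_le_map_conj hK hco.1
    have hKH := ((hco.le_iff.1 hle).resolve_left (hH.isCoatom_map_conj hn u).1.1).symm
    rcases hH with rfl | ⟨hn2, rfl⟩ | ⟨hn3, hodd, rfl⟩
    exacts [⟨u, Or.inl hKH⟩, ⟨u, Or.inr (Or.inl ⟨hn2, hKH⟩)⟩,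
      ⟨u, Or.inr (Or.inr ⟨hn3, hodd, hKH⟩)⟩]
  · rintro ⟨u, rfl | ⟨hn2, rfl⟩ | ⟨hn3, hodd, rfl⟩⟩
    exacts [IsStandardMaximal.isCoatom_map_conj hn (Or.inl rfl) u,
      IsStandardMaximal.isCoatom_map_conj hn (Or.inr (Or.inl ⟨hn2, rfl⟩)) u,
      IsStandardMaximal.isCoatom_map_conj hn (Or.inr (Or.inr ⟨hn3, hodd, rfl⟩)) u]
  · obtain ⟨H, hH, u, hle⟩ := exists_isStandardMaximal_le_map_conj hK hKtop
    rcases hH with rfl | ⟨-, rfl⟩ | ⟨hn3, hodd, rfl⟩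
    exacts [⟨u, Or.inl hle⟩, ⟨u, Or.inr (Or.inl hle)⟩, ⟨u, Or.inr (Or.inr ⟨hn3, hodd, hle⟩)⟩]
end

section
/- Fix integers n ≥ 1 and b ≠ 0. For every b-reciprocal polynomial f ∈ ℤ[x] of degree 2n there exists a unique polynomial g = Σ_{i=0}^n c_i u^i ∈ ℤ[u] of degree n such that f(x) = Σ_{i=0}^n c_i x^{n−i}(x²+b)^i (formally, f(x) = x^n·g(x + b/x)). The resulting map g ↦ f is a bijection from the set of integer polynomials of degree n onto the set of b-reciprocal integer polynomials of degree 2n, and there is a constant c ≥ 1 depending only on n and b such that c^{−1}·Ht(g) ≤ Ht(f) ≤ c·Ht(g) for all such pairs (f, g). -/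
open Polynomial Finset

def Acoef (b : ℤ) (i j : ℕ) : ℤ :=
  if j ≤ i ∧ (i + j) % 2 = 0 then (i.choose ((i + j) / 2) : ℤ) * b ^ ((i - j) / 2) else 0

lemma coeff_sq_add_pow (b : ℤ) (i m : ℕ) :
    ((X ^ 2 + C b) ^ i).coeff m =
      if m % 2 = 0 ∧ m / 2 ≤ i then (i.choose (m / 2) : ℤ) * b ^ (i - m / 2) else 0 := by
  rw [add_pow, finset_sum_coeff]
  have hterm : ∀ k, ((X ^ 2 : ℤ[X]) ^ k * C b ^ (i - k) * (i.choose k : ℤ[X])) =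
      monomial (2 * k) ((i.choose k : ℤ) * b ^ (i - k)) := by
    intro k
    rw [← pow_mul, ← C_pow, ← C_eq_natCast, ← C_mul_X_pow_eq_monomial, C_mul]
    ring
  simp only [hterm, coeff_monomial]
  by_cases hm : m % 2 = 0 ∧ m / 2 ≤ i
  · rw [if_pos hm, Finset.sum_eq_single (m / 2)]
    · rw [if_pos (by omega)]
    · intro k _ hk; rw [if_neg (by omega)]
    · intro h; exact absurd (Finset.mem_range.2 (by omega)) h
  · rw [if_neg hm, Finset.sum_eq_zero]
    intro k hk
    have hk' := Finset.mem_range.mp hk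
    rw [if_neg (by omega)]

lemma coeff_term (n : ℕ) (b c : ℤ) (i m : ℕ) :
    (C c * X ^ (n - i) * (X ^ 2 + C b) ^ i).coeff m =
      c * (if n - i ≤ m then ((X ^ 2 + C b) ^ i).coeff (m - (n - i)) else 0) := by
  have : C c * X ^ (n - i) * (X ^ 2 + C b) ^ i = C c * ((X ^ 2 + C b) ^ i * X ^ (n - i)) := by
    ring
  rw [this, coeff_C_mul, coeff_mul_X_pow']

lemma coeff_hi (n : ℕ) (b : ℤ) (g : Polynomial ℤ) (j : ℕ) :
    (expandPoly n b g).coeff (n + j) =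
      ∑ i ∈ Finset.range (n + 1), Acoef b i j * g.coeff i := by
  rw [expandPoly, finset_sum_coeff]
  refine Finset.sum_congr rfl fun i hi => ?_
  have hin : i ≤ n := by simpa using Nat.lt_succ_iff.mp (Finset.mem_range.mp hi)
  rw [coeff_term, if_pos (by omega)]
  have hidx : n + j - (n - i) = i + j := by omega
  rw [hidx, coeff_sq_add_pow, Acoef]
  by_cases h : j ≤ i ∧ (i + j) % 2 = 0
  · rw [if_pos (by omega), if_pos h]
    have h1 : i - (i + j) / 2 = (i - j) / 2 := by omega
    rw [h1]; ring
  · rw [if_neg (by omega), if_neg h, mul_zero, zero_mul]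

lemma coeff_lo (n : ℕ) (b : ℤ) (g : Polynomial ℤ) (j : ℕ) (hj : j ≤ n) :
    (expandPoly n b g).coeff (n - j) =
      b ^ j * ∑ i ∈ Finset.range (n + 1), Acoef b i j * g.coeff i := by
  rw [expandPoly, finset_sum_coeff, Finset.mul_sum]
  refine Finset.sum_congr rfl fun i hi => ?_
  have hin : i ≤ n := by simpa using Nat.lt_succ_iff.mp (Finset.mem_range.mp hi)
  rw [coeff_term, Acoef]
  by_cases hji : j ≤ i
  · rw [if_pos (by omega)]
    have hidx : n - j - (n - i) = i - j := by omega
    rw [hidx, coeff_sq_add_pow]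
    by_cases hp : (i + j) % 2 = 0
    · rw [if_pos (by omega), if_pos ⟨hji, hp⟩]
      have hc : i.choose ((i - j) / 2) = i.choose ((i + j) / 2) := by
        have h2 : (i - j) / 2 = i - (i + j) / 2 := by omega
        rw [h2, Nat.choose_symm (by omega)]
      have hbp : i - (i - j) / 2 = j + (i - j) / 2 := by omega
      rw [hc, hbp, pow_add]; ring
    · rw [if_neg (by omega), if_neg (by omega), mul_zero, zero_mul, mul_zero]
  · rw [if_neg (by omega), if_neg (by omega), mul_zero, zero_mul, mul_zero]

lemma Acoef_diag (b : ℤ) (i : ℕ) : Acoef b i i = 1 := by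
  rw [Acoef, if_pos ⟨le_refl i, by omega⟩]
  have h1 : (i + i) / 2 = i := by omega
  have h2 : (i - i) / 2 = 0 := by omega
  simp [h1, h2]

lemma Acoef_eq_zero (b : ℤ) {i j : ℕ} (h : ¬ j ≤ i) : Acoef b i j = 0 := by
  rw [Acoef, if_neg (by tauto)]

def Amat (n : ℕ) (b : ℤ) : Matrix (Fin (n + 1)) (Fin (n + 1)) ℤ :=
  Matrix.of fun p q => Acoef b q p

lemma Amat_det (n : ℕ) (b : ℤ) : (Amat n b).det = 1 := by
  rw [Matrix.det_of_upperTriangular]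
  · exact Finset.prod_eq_one fun i _ => Acoef_diag b i
  · intro i j hij
    exact Acoef_eq_zero b (by exact_mod_cast Nat.not_le.mpr hij)

lemma Amat_isUnit_det (n : ℕ) (b : ℤ) : IsUnit (Amat n b).det := by
  rw [Amat_det]; exact isUnit_one

lemma sum_eq_mulVec (n : ℕ) (b : ℤ) (g : Polynomial ℤ) (j : Fin (n + 1)) :
    ∑ i ∈ Finset.range (n + 1), Acoef b i (j : ℕ) * g.coeff i =
      (Amat n b).mulVec (fun i : Fin (n + 1) => g.coeff i) j := by
  rw [← Fin.sum_univ_eq_sum_range (fun i => Acoef b i (j : ℕ) * g.coeff i) (n + 1)]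
  rfl

lemma Amat_mulVec_inj (n : ℕ) (b : ℤ) {v w : Fin (n + 1) → ℤ}
    (h : (Amat n b).mulVec v = (Amat n b).mulVec w) : v = w := by
  have h2 := congrArg (fun u => (Amat n b)⁻¹.mulVec u) h
  simpa [Matrix.mulVec_mulVec, Matrix.nonsing_inv_mul _ (Amat_isUnit_det n b),
    Matrix.one_mulVec] using h2

lemma Amat_mulVec_surj (n : ℕ) (b : ℤ) (w : Fin (n + 1) → ℤ) :
    ∃ v, (Amat n b).mulVec v = w := by
  refine ⟨(Amat n b)⁻¹.mulVec w, ?_⟩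
  rw [Matrix.mulVec_mulVec, Matrix.mul_nonsing_inv _ (Amat_isUnit_det n b),
    Matrix.one_mulVec]

lemma coeff_hi_eq_zero (n : ℕ) (b : ℤ) (g : Polynomial ℤ) {j : ℕ} (hj : n < j) :
    (expandPoly n b g).coeff (n + j) = 0 := by
  rw [coeff_hi, Finset.sum_eq_zero]
  intro i hi
  have := Finset.mem_range.mp hi
  rw [Acoef_eq_zero b (by omega), zero_mul]

lemma expandPoly_degree_le (n : ℕ) (b : ℤ) (g : Polynomial ℤ) :
    (expandPoly n b g).degree ≤ (2 * n : ℕ) := by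
  rw [degree_le_iff_coeff_zero]
  intro m hm
  have hm' : 2 * n < m := by exact_mod_cast hm
  have h1 : m = n + (m - n) := by omega
  rw [h1]
  exact coeff_hi_eq_zero n b g (by omega)

lemma coeff_top (n : ℕ) (b : ℤ) (g : Polynomial ℤ) :
    (expandPoly n b g).coeff (2 * n) = g.coeff n := by
  have h1 : 2 * n = n + n := by omega
  rw [h1, coeff_hi, Finset.sum_eq_single n]
  · rw [Acoef_diag, one_mul]
  · intro i hi hin
    have := Finset.mem_range.mp hi
    rw [Acoef_eq_zero b (by omega), zero_mul]
  · intro h; exact absurd (Finset.mem_range.2 (by omega)) h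

lemma expandPoly_reciprocal (n : ℕ) (b : ℤ) (g : Polynomial ℤ) {j : ℕ} (hj : j ≤ n) :
    (expandPoly n b g).coeff (n - j) = b ^ j * (expandPoly n b g).coeff (n + j) := by
  rw [coeff_lo n b g j hj, coeff_hi]

lemma coeff_finSum (n : ℕ) (v : Fin (n + 1) → ℤ) (k : ℕ) :
    (∑ i : Fin (n + 1), (monomial (i : ℕ) (v i) : Polynomial ℤ)).coeff k =
      if h : k < n + 1 then v ⟨k, h⟩ else 0 := by
  rw [finset_sum_coeff]
  simp only [coeff_monomial]
  by_cases h : k < n + 1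
  · rw [dif_pos h, Finset.sum_eq_single (⟨k, h⟩ : Fin (n + 1))]
    · simp
    · intro i _ hik
      rw [if_neg]
      intro hc
      exact hik (Fin.ext hc)
    · simp
  · rw [dif_neg h, Finset.sum_eq_zero]
    intro i _
    rw [if_neg]
    have := i.isLt
    omega

lemma expandPoly_injOn (n : ℕ) (b : ℤ) {g g' : Polynomial ℤ}
    (hg : g.degree ≤ (n : ℕ)) (hg' : g'.degree ≤ (n : ℕ))
    (h : expandPoly n b g = expandPoly n b g') : g = g' := by
  have hv : (fun i : Fin (n + 1) => g.coeff i) = fun i : Fin (n + 1) => g'.coeff i := by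
    apply Amat_mulVec_inj n b
    funext j
    rw [← sum_eq_mulVec, ← sum_eq_mulVec, ← coeff_hi, ← coeff_hi, h]
  ext k
  by_cases hk : k < n + 1
  · exact congrFun hv ⟨k, hk⟩
  · rw [coeff_eq_zero_of_degree_lt (lt_of_le_of_lt hg (by exact_mod_cast by omega)),
      coeff_eq_zero_of_degree_lt (lt_of_le_of_lt hg' (by exact_mod_cast by omega))]

lemma expandPoly_exists (n : ℕ) (b : ℤ) (f : Polynomial ℤ)
    (hdeg : f.degree = (2 * n : ℕ))
    (hrec : ∀ i ≤ n, f.coeff (n - i) = b ^ i * f.coeff (n + i)) :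
    ∃ g : Polynomial ℤ, g.degree = (n : ℕ) ∧ f = expandPoly n b g := by
  obtain ⟨v, hv⟩ := Amat_mulVec_surj n b (fun j : Fin (n + 1) => f.coeff (n + j))
  set g : Polynomial ℤ := ∑ i : Fin (n + 1), (monomial (i : ℕ) (v i) : Polynomial ℤ) with hgdef
  have hgc : ∀ i : Fin (n + 1), g.coeff i = v i := by
    intro i
    rw [hgdef, coeff_finSum, dif_pos i.isLt]
  have hmatch : ∀ j : ℕ, (expandPoly n b g).coeff (n + j) = f.coeff (n + j) := by
    intro j
    by_cases hj : j ≤ n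
    · rw [coeff_hi]
      have := congrFun hv ⟨j, by omega⟩
      simp only at this
      rw [show (∑ i ∈ Finset.range (n + 1), Acoef b i j * g.coeff i) =
          (Amat n b).mulVec (fun i : Fin (n + 1) => g.coeff i) ⟨j, by omega⟩ from
          sum_eq_mulVec n b g ⟨j, by omega⟩]
      rw [show (fun i : Fin (n + 1) => g.coeff i) = v from funext hgc]
      exact this
    · rw [coeff_hi_eq_zero n b g (by omega),
        coeff_eq_zero_of_degree_lt (hdeg ▸ (by exact_mod_cast by omega : ((2*n : ℕ) : WithBot ℕ) < ((n + j : ℕ) : WithBot ℕ)))]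
  have hfe : f = expandPoly n b g := by
    ext m
    by_cases hm : n ≤ m
    · have h1 : m = n + (m - n) := by omega
      rw [h1, hmatch]
    · have h1 : m = n - (n - m) := by omega
      rw [h1, expandPoly_reciprocal n b g (by omega), hmatch, ← hrec (n - m) (by omega)]
  have hgn : g.coeff n ≠ 0 := by
    have h2 := coeff_top n b g
    rw [← hfe] at h2
    rw [← h2]
    exact coeff_ne_zero_of_eq_degree hdeg
  have hgdeg : g.degree = (n : ℕ) := by
    apply degree_eq_of_le_of_coeff_ne_zero _ hgn
    rw [hgdef]
    refine le_trans (degree_sum_le _ _) ?_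
    apply Finset.sup_le
    intro i _
    exact le_trans (degree_monomial_le _ _) (by exact_mod_cast by omega : ((i : ℕ) : WithBot ℕ) ≤ (n : ℕ))
  exact ⟨g, hgdeg, hfe⟩

lemma expandPoly_mapsTo (n : ℕ) (b : ℤ) {g : Polynomial ℤ} (hg : g.degree = (n : ℕ)) :
    (expandPoly n b g).degree = (2 * n : ℕ) ∧
      ∀ i ≤ n, (expandPoly n b g).coeff (n - i) = b ^ i * (expandPoly n b g).coeff (n + i) := by
  constructor
  · apply degree_eq_of_le_of_coeff_ne_zero (expandPoly_degree_le n b g)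
    rw [coeff_top]
    exact coeff_ne_zero_of_eq_degree hg
  · intro i hi
    exact expandPoly_reciprocal n b g hi

/-- The height of an integer polynomial: the maximum of the absolute values of its
coefficients. -/
def polyHeight (p : Polynomial ℤ) : ℕ :=
  p.support.sup fun i => (p.coeff i).natAbs

lemma coeff_natAbs_le (p : Polynomial ℤ) (i : ℕ) : (p.coeff i).natAbs ≤ polyHeight p := by
  by_cases h : i ∈ p.support
  · exact Finset.le_sup (f := fun i => (p.coeff i).natAbs) h
  · rw [Polynomial.notMem_support_iff.mp h]
    exact Nat.zero_le _

lemma Acoef_natAbs_le (n : ℕ) (b : ℤ) (hb : b ≠ 0) {i : ℕ} (hi : i ≤ n) (j : ℕ) :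
    (Acoef b i j).natAbs ≤ (n + 1) ^ n * b.natAbs ^ n := by
  rw [Acoef]
  split_ifs with h
  · rw [Int.natAbs_mul, Int.natAbs_pow, Int.natAbs_natCast]
    have hM : 1 ≤ b.natAbs := Int.natAbs_pos.2 hb
    refine Nat.mul_le_mul ?_ (Nat.pow_le_pow_right hM (by omega))
    refine le_trans (Nat.choose_le_pow _ _) ?_
    exact le_trans (Nat.pow_le_pow_left (by omega) _) (Nat.pow_le_pow_right (by omega) (by omega))
  · simp

lemma sum_natAbs_le (n : ℕ) (b : ℤ) (hb : b ≠ 0) (g : Polynomial ℤ) (j : ℕ) :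
    (∑ i ∈ Finset.range (n + 1), Acoef b i j * g.coeff i).natAbs ≤
      (n + 1) * ((n + 1) ^ n * b.natAbs ^ n * polyHeight g) := by
  calc (∑ i ∈ Finset.range (n + 1), Acoef b i j * g.coeff i).natAbs
      ≤ ∑ i ∈ Finset.range (n + 1), (Acoef b i j * g.coeff i).natAbs := nat_abs_sum_le _ _
    _ ≤ ∑ _i ∈ Finset.range (n + 1), (n + 1) ^ n * b.natAbs ^ n * polyHeight g := by
        refine Finset.sum_le_sum fun i hi => ?_
        rw [Int.natAbs_mul]
        exact Nat.mul_le_mul (Acoef_natAbs_le n b hb (by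
          have := Finset.mem_range.mp hi; omega) j) (coeff_natAbs_le g i)
    _ = (n + 1) * ((n + 1) ^ n * b.natAbs ^ n * polyHeight g) := by
        rw [Finset.sum_const, Finset.card_range, smul_eq_mul]

lemma height_upper (n : ℕ) (b : ℤ) (hb : b ≠ 0) (g : Polynomial ℤ) :
    polyHeight (expandPoly n b g) ≤
      b.natAbs ^ n * ((n + 1) * ((n + 1) ^ n * b.natAbs ^ n)) * polyHeight g := by
  have hM : 1 ≤ b.natAbs := Int.natAbs_pos.2 hb
  apply Finset.sup_le
  intro m _
  have key : ∀ j : ℕ, ((expandPoly n b g).coeff (n + j)).natAbs ≤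
      (n + 1) * ((n + 1) ^ n * b.natAbs ^ n * polyHeight g) := by
    intro j
    rw [coeff_hi]
    exact sum_natAbs_le n b hb g j
  by_cases hm : n ≤ m
  · have h1 : m = n + (m - n) := by omega
    rw [h1]
    refine le_trans (key (m - n)) ?_
    have h2 : 1 ≤ b.natAbs ^ n := Nat.one_le_pow _ _ (by omega)
    calc (n + 1) * ((n + 1) ^ n * b.natAbs ^ n * polyHeight g)
        ≤ b.natAbs ^ n * ((n + 1) * ((n + 1) ^ n * b.natAbs ^ n * polyHeight g)) :=
          Nat.le_mul_of_pos_left _ (by omega)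
      _ = b.natAbs ^ n * ((n + 1) * ((n + 1) ^ n * b.natAbs ^ n)) * polyHeight g := by ring
  · have h1 : m = n - (n - m) := by omega
    rw [h1, coeff_lo n b g (n - m) (by omega), Int.natAbs_mul, Int.natAbs_pow]
    refine le_trans (Nat.mul_le_mul (Nat.pow_le_pow_right hM (by omega : n - m ≤ n))
      (sum_natAbs_le n b hb g (n - m))) ?_
    exact le_of_eq (by ring)

lemma height_lower_claim (n : ℕ) (b : ℤ) (hb : b ≠ 0) (g : Polynomial ℤ) :
    ∀ d j : ℕ, n - d ≤ j → j ≤ n →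
      (g.coeff j).natAbs ≤
        (1 + n * ((n + 1) ^ n * b.natAbs ^ n)) ^ d * polyHeight (expandPoly n b g) := by
  set B := (n + 1) ^ n * b.natAbs ^ n with hB
  set f := expandPoly n b g with hf
  set H := polyHeight f with hH
  intro d
  induction d with
  | zero =>
    intro j h1 h2
    have hj : j = n := by omega
    rw [hj, pow_zero, one_mul, ← coeff_top n b g]
    exact coeff_natAbs_le f _
  | succ d ih =>
    intro j h1 h2
    by_cases hnd : n - d ≤ j
    · refine le_trans (ih j hnd h2) (Nat.mul_le_mul_right _ ?_)
      exact Nat.pow_le_pow_right (by omega) (by omega)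
    · have hjd : j = n - d - 1 := by omega
      have hjr : j ∈ Finset.range (n + 1) := Finset.mem_range.2 (by omega)
      have heq : g.coeff j = f.coeff (n + j) -
          ∑ i ∈ (Finset.range (n + 1)).erase j, Acoef b i j * g.coeff i := by
        rw [hf, coeff_hi, ← Finset.add_sum_erase _ _ hjr, Acoef_diag, one_mul]
        ring
      have hsum : (∑ i ∈ (Finset.range (n + 1)).erase j,
          Acoef b i j * g.coeff i).natAbs ≤ n * (B * ((1 + n * B) ^ d * H)) := by
        calc (∑ i ∈ (Finset.range (n + 1)).erase j, Acoef b i j * g.coeff i).natAbs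
            ≤ ∑ i ∈ (Finset.range (n + 1)).erase j, (Acoef b i j * g.coeff i).natAbs :=
              nat_abs_sum_le _ _
          _ ≤ ∑ _i ∈ (Finset.range (n + 1)).erase j, B * ((1 + n * B) ^ d * H) := by
              refine Finset.sum_le_sum fun i hi => ?_
              have hi1 : i ∈ Finset.range (n + 1) := Finset.mem_erase.mp hi |>.2
              have hi2 : i ≠ j := Finset.mem_erase.mp hi |>.1
              have hi3 : i ≤ n := by have := Finset.mem_range.mp hi1; omega
              by_cases hij : j ≤ i
              · rw [Int.natAbs_mul]
                exact Nat.mul_le_mul (Acoef_natAbs_le n b hb hi3 j)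
                  (ih i (by omega) hi3)
              · rw [Acoef_eq_zero b hij, zero_mul]
                exact Nat.zero_le _
          _ = ((Finset.range (n + 1)).erase j).card * (B * ((1 + n * B) ^ d * H)) := by
              rw [Finset.sum_const, smul_eq_mul]
          _ = n * (B * ((1 + n * B) ^ d * H)) := by
              rw [Finset.card_erase_of_mem hjr, Finset.card_range]
              simp
      have hfc : (f.coeff (n + j)).natAbs ≤ H := coeff_natAbs_le f _
      have hP : 1 ≤ (1 + n * B) ^ d := Nat.one_le_pow _ _ (by omega)
      calc (g.coeff j).natAbs
          ≤ (f.coeff (n + j)).natAbs +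
            (∑ i ∈ (Finset.range (n + 1)).erase j, Acoef b i j * g.coeff i).natAbs := by
            rw [heq]; exact Int.natAbs_sub_le _ _
        _ ≤ H + n * (B * ((1 + n * B) ^ d * H)) := Nat.add_le_add hfc hsum
        _ ≤ (1 + n * B) ^ d * H + n * B * ((1 + n * B) ^ d * H) := by
            refine Nat.add_le_add ?_ (le_of_eq (by ring))
            exact Nat.le_mul_of_pos_left H (by omega)
        _ = (1 + n * B) ^ (d + 1) * H := by ring

lemma height_lower (n : ℕ) (b : ℤ) (hb : b ≠ 0) (g : Polynomial ℤ)
    (hg : g.degree = (n : ℕ)) :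
    polyHeight g ≤
      (1 + n * ((n + 1) ^ n * b.natAbs ^ n)) ^ n * polyHeight (expandPoly n b g) := by
  apply Finset.sup_le
  intro j hj
  have hjn : j ≤ n := by
    have := le_natDegree_of_mem_supp j hj
    rwa [natDegree_eq_of_degree_eq_some hg] at this
  exact height_lower_claim n b hb g n j (by omega) hjn

theorem expandPoly_bijOn_height (n : ℕ) (hn : 1 ≤ n) (b : ℤ) (hb : b ≠ 0) :
    (∀ f : Polynomial ℤ, f.degree = (2 * n : ℕ) →
      (∀ i ≤ n, f.coeff (n - i) = b ^ i * f.coeff (n + i)) →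
      ∃! g : Polynomial ℤ, g.degree = (n : ℕ) ∧ f = expandPoly n b g) ∧
    Set.BijOn (expandPoly n b) {g : Polynomial ℤ | g.degree = (n : ℕ)}
      {f : Polynomial ℤ | f.degree = (2 * n : ℕ) ∧
        ∀ i ≤ n, f.coeff (n - i) = b ^ i * f.coeff (n + i)} ∧
    ∃ c : ℕ, 1 ≤ c ∧ ∀ g : Polynomial ℤ, g.degree = (n : ℕ) →
      polyHeight (expandPoly n b g) ≤ c * polyHeight g ∧
      polyHeight g ≤ c * polyHeight (expandPoly n b g) := by
  refine ⟨?_, ⟨?_, ?_, ?_⟩, ?_⟩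
  · intro f hdeg hrec
    obtain ⟨g, hg1, hg2⟩ := expandPoly_exists n b f hdeg hrec
    refine ⟨g, ⟨hg1, hg2⟩, ?_⟩
    rintro g' ⟨hg'1, hg'2⟩
    exact expandPoly_injOn n b (le_of_eq hg'1) (le_of_eq hg1) (hg2 ▸ hg'2.symm)
  · intro g hg
    exact expandPoly_mapsTo n b hg
  · intro g hg g' hg' h
    exact expandPoly_injOn n b (le_of_eq hg) (le_of_eq hg') h
  · intro f hf
    obtain ⟨g, hg1, hg2⟩ := expandPoly_exists n b f hf.1 hf.2
    exact ⟨g, hg1, hg2.symm⟩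
  · refine ⟨b.natAbs ^ n * ((n + 1) * ((n + 1) ^ n * b.natAbs ^ n)) +
      (1 + n * ((n + 1) ^ n * b.natAbs ^ n)) ^ n, ?_, ?_⟩
    · have : 1 ≤ (1 + n * ((n + 1) ^ n * b.natAbs ^ n)) ^ n :=
        Nat.one_le_pow _ _ (by omega)
      omega
    · intro g hg
      constructor
      · refine le_trans (height_upper n b hb g) (Nat.mul_le_mul_right _ ?_)
        omega
      · refine le_trans (height_lower n b hb g hg) (Nat.mul_le_mul_right _ ?_)
        omega
end

section
/- Fix integers n ≥ 1 and b ≠ 0. Let f ∈ ℤ[x] be a separable b-reciprocal polynomial of degree 2n. Then every root of f (in an algebraic closure of ℚ) is nonzero, the map α ↦ b/α permutes the roots of f, and the order of the Galois group of the splitting field of f over ℚ divides 2^n · n!. -/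
/-!
Reflecting and rescaling the coefficients gives `x ^ (2n) f(b / x) = b ^ n f(x)`; since
`f(0) = b ^ n · lc f ≠ 0`, the map `x ↦ b / x` is an involution `σ` of the `2n` roots.
Galois automorphisms fix `b`, so the Galois group embeds in the centralizer of `σ` in the
symmetric group on the roots. The fixed points of `σ` are square roots of `b`, so `σ` is a product
of `k` disjoint transpositions with `2n - 2k ≤ 2`, and its centralizer
`(C₂ ≀ S_k) × S_(2n-2k)` has order `2 ^ k k! (2n - 2k)!`, which divides `2 ^ n n!`.
-/

open Polynomial
open scoped Nat

namespace Equiv.Perm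

variable {α : Type*} [Fintype α] [DecidableEq α]

theorem nat_card_centralizer_of_cycleType_eq_replicate_two {σ : Perm α} {k : ℕ}
    (hσ : σ.cycleType = Multiset.replicate k 2) :
    Nat.card (Subgroup.centralizer {σ}) = (Fintype.card α - 2 * k)! * 2 ^ k * k ! := by
  rw [nat_card_centralizer, hσ, Multiset.sum_replicate, Multiset.prod_replicate, smul_eq_mul,
    mul_comm k, Multiset.toFinset_replicate]
  split_ifs with hk
  · simp [hk]
  · rw [Finset.prod_singleton, Multiset.count_replicate_self]

theorem nat_card_centralizer_dvd_of_sq_eq_one {σ : Perm α} {n : ℕ} (hσ : σ ^ 2 = 1)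
    (hα : Fintype.card α = 2 * n) (hfix : Nat.card (Function.fixedPoints σ) ≤ 2) :
    Nat.card (Subgroup.centralizer {σ}) ∣ 2 ^ n * n ! := by
  obtain ⟨k, hk⟩ : ∃ k, σ.cycleType = Multiset.replicate k 2 :=
    ⟨_, cycleType_of_pow_prime_eq_one hσ⟩
  have hsum : σ.cycleType.sum = 2 * k := by
    rw [hk, Multiset.sum_replicate, smul_eq_mul, mul_comm]
  have hkn : 2 * k ≤ 2 * n := hsum ▸ hα ▸ sum_cycleType_le σ
  have hm : 2 * n - 2 * k ≤ 2 := by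
    rwa [Nat.card_eq_fintype_card, card_fixedPoints, hsum, hα] at hfix
  rw [nat_card_centralizer_of_cycleType_eq_replicate_two hk, hα]
  obtain rfl | rfl : n = k ∨ n = k + 1 := by omega
  · simp
  · rw [show 2 * (k + 1) - 2 * k = 2 by omega]
    exact Dvd.intro (k + 1) (by rw [Nat.factorial_two, Nat.factorial_succ, pow_succ]; ring)

end Equiv.Perm

namespace Polynomial

def IsBReciprocal {R : Type*} [Semiring R] (f : R[X]) (n : ℕ) (b : R) : Prop :=
  ∀ i ≤ n, f.coeff (n - i) = b ^ i * f.coeff (n + i)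

namespace IsBReciprocal

theorem map {R S : Type*} [Semiring R] [Semiring S] {f : R[X]} {n : ℕ} {b : R}
    (h : f.IsBReciprocal n b) (ψ : R →+* S) : (f.map ψ).IsBReciprocal n (ψ b) := fun i hi => by
  rw [coeff_map, coeff_map, h i hi, map_mul, map_pow]

section Domain

variable {R : Type*} [CommRing R] [IsDomain R] {f : R[X]} {n : ℕ} {b : R}

theorem coeff_zero_ne_zero (h : f.IsBReciprocal n b) (hb : b ≠ 0) (hf : f ≠ 0)
    (hdeg : f.natDegree = 2 * n) : f.coeff 0 ≠ 0 := by
  have h0 := h n le_rfl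
  rw [Nat.sub_self, ← two_mul, ← hdeg] at h0
  rw [h0]
  exact mul_ne_zero (pow_ne_zero n hb) (leadingCoeff_ne_zero.mpr hf)

theorem natDegree_reflect (h : f.IsBReciprocal n b) (hb : b ≠ 0) (hf : f ≠ 0)
    (hdeg : f.natDegree = 2 * n) : (reflect (2 * n) f).natDegree = 2 * n := by
  refine le_antisymm (natDegree_le_iff_coeff_eq_zero.mpr fun N hN => ?_)
    (le_natDegree_of_ne_zero ?_)
  · rw [coeff_reflect, revAt_eq_self_of_lt hN]
    exact coeff_eq_zero_of_natDegree_lt (by omega)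
  · rw [coeff_reflect, revAt_le le_rfl, Nat.sub_self]
    exact h.coeff_zero_ne_zero hb hf hdeg

theorem scaleRoots_reflect (h : f.IsBReciprocal n b) (hb : b ≠ 0) (hf : f ≠ 0)
    (hdeg : f.natDegree = 2 * n) : (reflect (2 * n) f).scaleRoots b = C (b ^ n) * f := by
  ext j
  rw [coeff_scaleRoots, h.natDegree_reflect hb hf hdeg, coeff_reflect, coeff_C_mul]
  obtain hj | hj := le_or_gt j (2 * n)
  · rw [revAt_le hj]
    obtain hjn | hjn := le_total j n
    · have hcoeff := h (n - j) (by omega)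
      rw [show n - (n - j) = j by omega, show n + (n - j) = 2 * n - j by omega] at hcoeff
      rw [hcoeff, ← mul_assoc, ← pow_add, show n + (n - j) = 2 * n - j by omega, mul_comm]
    · have hcoeff := h (j - n) (by omega)
      rw [show n - (j - n) = 2 * n - j by omega, show n + (j - n) = j by omega] at hcoeff
      rw [hcoeff, mul_right_comm, ← pow_add, show j - n + (2 * n - j) = n by omega]
  · rw [revAt_eq_self_of_lt hj, coeff_eq_zero_of_natDegree_lt (hdeg ▸ hj), mul_zero, zero_mul]

end Domain

section Field

variable {k K : Type*} [Field k] [Field K] [Algebra k K] {f : k[X]} {n : ℕ} {b : k}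

theorem ne_zero_of_aeval_eq_zero (h : f.IsBReciprocal n b) (hb : b ≠ 0) (hf : f ≠ 0)
    (hdeg : f.natDegree = 2 * n) {x : K} (hx : aeval x f = 0) : x ≠ 0 := by
  rintro rfl
  rw [← coeff_zero_eq_aeval_zero', map_eq_zero] at hx
  exact h.coeff_zero_ne_zero hb hf hdeg hx

theorem aeval_div_eq_zero (h : f.IsBReciprocal n b) (hb : b ≠ 0) (hf : f ≠ 0)
    (hdeg : f.natDegree = 2 * n) {x : K} (hx : aeval x f = 0) :
    aeval (algebraMap k K b / x) f = 0 := by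
  let := invertibleOfNonzero (h.ne_zero_of_aeval_eq_zero hb hf hdeg hx)
  have hinv : eval₂ (algebraMap k K) (⅟x) (reflect (2 * n) f) = 0 :=
    (eval₂_reflect_eq_zero_iff _ x _ f hdeg.le).mpr hx
  have hscaled := scaleRoots_eval₂_eq_zero (algebraMap k K) (s := b) hinv
  rw [h.scaleRoots_reflect hb hf hdeg, eval₂_mul, eval₂_C, invOf_eq_inv, ← div_eq_mul_inv]
    at hscaled
  exact (mul_eq_zero.mp hscaled).resolve_left (by simpa using pow_ne_zero n hb)

theorem aeval_div_eq_zero_iff (h : f.IsBReciprocal n b) (hb : b ≠ 0) (hf : f ≠ 0)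
    (hdeg : f.natDegree = 2 * n) (x : K) :
    aeval (algebraMap k K b / x) f = 0 ↔ aeval x f = 0 := by
  refine ⟨fun hx => ?_, h.aeval_div_eq_zero hb hf hdeg⟩
  simpa [hb] using h.aeval_div_eq_zero hb hf hdeg hx

end Field

end IsBReciprocal

end Polynomial

namespace Equiv

variable {K : Type*} [Field K] {c : K} (hc : c ≠ 0) {s : Set K}
  (hs : ∀ x, c / x ∈ s ↔ x ∈ s)

theorem subtypePerm_divLeft₀_sq : ((divLeft₀ c hc).subtypePerm hs) ^ 2 = 1 := by
  rw [sq]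
  ext x
  exact div_div_cancel₀ hc

-- `divLeft₀ c hc` fixes `0`, since `c / 0 = 0`.
theorem nat_card_fixedPoints_subtypePerm_divLeft₀_le (h0 : 0 ∉ s) :
    Nat.card (Function.fixedPoints ((divLeft₀ c hc).subtypePerm hs)) ≤ 2 := by
  classical
  have hsq : ∀ x : Function.fixedPoints ((divLeft₀ c hc).subtypePerm hs), (x : K) ^ 2 = c := by
    rintro ⟨⟨x, hxs⟩, hx⟩
    have hx0 : x ≠ 0 := fun hx0 => h0 (hx0 ▸ hxs)
    have hfix : c / x = x := congrArg Subtype.val hx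
    rw [div_eq_iff hx0] at hfix
    rw [sq, ← hfix]
  calc Nat.card (Function.fixedPoints ((divLeft₀ c hc).subtypePerm hs))
      ≤ Nat.card (nthRootsFinset 2 c) :=
        Nat.card_le_card_of_injective
          (fun x => ⟨x, (mem_nthRootsFinset two_pos c).mpr (hsq x)⟩)
          (fun x y hxy => Subtype.ext (Subtype.ext (congrArg Subtype.val hxy :)))
    _ = (nthRootsFinset 2 c).card := Nat.card_eq_finsetCard _
    _ ≤ 2 := by
      rw [nthRootsFinset_def]
      exact (Multiset.toFinset_card_le _).trans (card_nthRoots 2 c)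

end Equiv

namespace Polynomial.Gal

variable {F E : Type*} [Field F] [Field E] [Algebra F E] {p : F[X]}
  [Fact ((p.map (algebraMap F E)).Splits)]

theorem card_dvd_card_centralizer {σ : Equiv.Perm (p.rootSet E)}
    (hσ : ∀ g : p.Gal, Commute (galActionHom p E g) σ) :
    Nat.card p.Gal ∣ Nat.card (Subgroup.centralizer {σ}) := by
  have hrange : (galActionHom p E).range ≤ Subgroup.centralizer {σ} := by
    rintro _ ⟨g, rfl⟩
    exact Subgroup.mem_centralizer_singleton_iff.mpr (hσ g).eq
  rw [← Nat.card_range_of_injective (galActionHom_injective p E)]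
  exact Subgroup.card_dvd_of_le hrange

theorem commute_galActionHom_subtypePerm_divLeft₀ [Normal F E] {c : E} (hc : c ≠ 0)
    (hfixed : ∀ ϕ : Gal(E/F), ϕ c = c) (hs : ∀ x, c / x ∈ p.rootSet E ↔ x ∈ p.rootSet E)
    (g : p.Gal) : Commute (galActionHom p E g) ((Equiv.divLeft₀ c hc).subtypePerm hs) := by
  obtain ⟨ϕ, rfl⟩ := restrict_surjective p E g
  refine Equiv.ext fun x => Subtype.ext ?_
  change (galActionHom p E (restrict p E ϕ) _ : E) = c / (galActionHom p E (restrict p E ϕ) x : E)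
  rw [galActionHom_restrict, galActionHom_restrict]
  exact (map_div₀ ϕ c x).trans (congrArg (· / ϕ x) (hfixed ϕ))

end Polynomial.Gal

theorem bReciprocal_roots_general (n : ℕ) (b : ℤ) (hb : b ≠ 0) (f : Polynomial ℤ)
    (hdeg : f.degree = (2 * n : ℕ))
    (hrec : ∀ i ≤ n, f.coeff (n - i) = b ^ i * f.coeff (n + i))
    (hsep : (f.map (Int.castRingHom ℚ)).Separable) :
    (∀ x : (f.map (Int.castRingHom ℚ)).SplittingField,
        aeval x (f.map (Int.castRingHom ℚ)) = 0 → x ≠ 0) ∧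
    Set.BijOn
      (fun x : (f.map (Int.castRingHom ℚ)).SplittingField =>
        (b : (f.map (Int.castRingHom ℚ)).SplittingField) / x)
      {x | aeval x (f.map (Int.castRingHom ℚ)) = 0}
      {x | aeval x (f.map (Int.castRingHom ℚ)) = 0} ∧
    Nat.card (f.map (Int.castRingHom ℚ)).Gal ∣ 2 ^ n * n.factorial := by
  classical
  set F := f.map (Int.castRingHom ℚ)
  set L := F.SplittingField
  have hFdegree : F.degree = (2 * n : ℕ) :=
    (degree_map_eq_of_injective Int.cast_injective f).trans hdeg
  have hF : F ≠ 0 := fun h => WithBot.bot_ne_coe (by rwa [h, degree_zero] at hFdegree)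
  have hFdeg : F.natDegree = 2 * n := natDegree_eq_of_degree_eq_some hFdegree
  have hFrec : F.IsBReciprocal n b := IsBReciprocal.map hrec (Int.castRingHom ℚ)
  have hbℚ : (b : ℚ) ≠ 0 := Int.cast_ne_zero.mpr hb
  have hbL : (b : L) ≠ 0 := Int.cast_ne_zero.mpr hb
  have hroots (x : L) : aeval ((b : L) / x) F = 0 ↔ aeval x F = 0 := by
    simpa using hFrec.aeval_div_eq_zero_iff hbℚ hF hFdeg x
  have hne (x : L) : aeval x F = 0 → x ≠ 0 := hFrec.ne_zero_of_aeval_eq_zero hbℚ hF hFdeg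
  refine ⟨hne, (Equiv.divLeft₀ _ hbL).bijOn hroots, ?_⟩
  have hs (x : L) : (b : L) / x ∈ F.rootSet L ↔ x ∈ F.rootSet L := by
    simp only [mem_rootSet_of_ne hF, hroots]
  have : Fact ((F.map (algebraMap ℚ L)).Splits) := ⟨SplittingField.splits F⟩
  have : Normal ℚ L := SplittingField.instNormal F
  have hcard : Fintype.card (F.rootSet L) = 2 * n :=
    (card_rootSet_eq_natDegree hsep (SplittingField.splits F)).trans hFdeg
  have h0 : (0 : L) ∉ F.rootSet L := fun h0 => hne 0 (mem_rootSet.mp h0).2 rfl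
  exact (Gal.card_dvd_card_centralizer
      (Gal.commute_galActionHom_subtypePerm_divLeft₀ hbL (fun ϕ => map_intCast ϕ b) hs)).trans
    (Equiv.Perm.nat_card_centralizer_dvd_of_sq_eq_one (Equiv.subtypePerm_divLeft₀_sq hbL hs)
      hcard (Equiv.nat_card_fixedPoints_subtypePerm_divLeft₀_le hbL hs h0))

theorem bReciprocal_roots (n : ℕ) (hn : 1 ≤ n) (b : ℤ) (hb : b ≠ 0) (f : Polynomial ℤ)
    (hdeg : f.degree = (2 * n : ℕ))
    (hrec : ∀ i ≤ n, f.coeff (n - i) = b ^ i * f.coeff (n + i))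
    (hsep : (f.map (Int.castRingHom ℚ)).Separable) :
    (∀ x : (f.map (Int.castRingHom ℚ)).SplittingField,
        aeval x (f.map (Int.castRingHom ℚ)) = 0 → x ≠ 0) ∧
    Set.BijOn
      (fun x : (f.map (Int.castRingHom ℚ)).SplittingField =>
        (b : (f.map (Int.castRingHom ℚ)).SplittingField) / x)
      {x | aeval x (f.map (Int.castRingHom ℚ)) = 0}
      {x | aeval x (f.map (Int.castRingHom ℚ)) = 0} ∧
    Nat.card (f.map (Int.castRingHom ℚ)).Gal ∣ 2 ^ n * n.factorial :=
  bReciprocal_roots_general n b hb f hdeg hrec hsep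
end
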